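/- arXiv:2007.07100 — 7 statements merged into one kernel-verified Lean document; each statement's English description precedes it below -/
import Mathlib

section
/- Let φ be an upper invariant, ordinally efficient, and symmetric mechanism on 4 agents and objects {a,b,c,d}. At the profile where agents 1,2,3 report a ≻ b ≻ c ≻ d and agent 4 reports a ≻ b ≻ d ≻ c, the assignment is: agents 1,2,3 each get (1/4, 1/4, 1/3, 1/6) for (a,b,c,d), and agent 4 gets (1/4, 1/4, 0, 1/2). -/
open Finset

/-- A strict preference order over `n` objects, encoded as a rank function:
`P j < P j'` means object `j` is strictly preferred to object `j'`. -/
abbrev Pref (n : ℕ) := Fin n ≃ Fin n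

/-- A (random) assignment: rows are agents, columns are objects. -/
abbrev Assignment (n : ℕ) := Fin n → Fin n → ℝ

/-- Bi-stochastic matrix: nonnegative entries, all rows and columns sum to 1. -/
def BiStochastic {n : ℕ} (x : Assignment n) : Prop :=
  (∀ i j, 0 ≤ x i j) ∧ (∀ i, ∑ j, x i j = 1) ∧ (∀ j, ∑ i, x i j = 1)

/-- A mechanism maps preference profiles to assignments. -/
abbrev Mechanism (n : ℕ) := (Fin n → Pref n) → Assignment n

/-- A mechanism always outputs bi-stochastic matrices. -/
def ValidMech {n : ℕ} (φ : Mechanism n) : Prop := ∀ P, BiStochastic (φ P)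

/-- `P'` arises from `P` by swapping the consecutively ranked objects `j ≻ j'`. -/
def AdjSwap {n : ℕ} (P P' : Pref n) (j j' : Fin n) : Prop :=
  (P j' : ℕ) = (P j : ℕ) + 1 ∧ P' = (Equiv.swap j j').trans P

/-- Upper invariance: a swap of consecutive `j ≻ j'` leaves the swapping agent's
probabilities for objects strictly preferred to `j` unchanged. -/
def UpperInvariant {n : ℕ} (φ : Mechanism n) : Prop :=
  ∀ (P : Fin n → Pref n) (i j j' : Fin n) (P' : Pref n),
    AdjSwap (P i) P' j j' →
    ∀ k, P i k < P i j → φ (Function.update P i P') i k = φ P i k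

/-- Lower invariance: a swap of consecutive `j ≻ j'` leaves the swapping agent's
probabilities for objects ranked strictly below `j'` unchanged. -/
def LowerInvariant {n : ℕ} (φ : Mechanism n) : Prop :=
  ∀ (P : Fin n → Pref n) (i j j' : Fin n) (P' : Pref n),
    AdjSwap (P i) P' j j' →
    ∀ k, P i j' < P i k → φ (Function.update P i P') i k = φ P i k

/-- Swap monotonicity: after a swap of consecutive `j ≻ j'`, either the agent's
assignment vector is unchanged, or her probability for `j` strictly decreases and
her probability for `j'` strictly increases. -/
def SwapMonotonic {n : ℕ} (φ : Mechanism n) : Prop :=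
  ∀ (P : Fin n → Pref n) (i j j' : Fin n) (P' : Pref n),
    AdjSwap (P i) P' j j' →
    φ (Function.update P i P') i = φ P i ∨
      (φ (Function.update P i P') i j < φ P i j ∧
       φ P i j' < φ (Function.update P i P') i j')

/-- `y` first order-stochastically dominates `x` at preference order `P`. -/
def FOSD {n : ℕ} (P : Pref n) (y x : Fin n → ℝ) : Prop :=
  ∀ j, ∑ k ∈ univ.filter (fun k => P k ≤ P j), x k ≤
       ∑ k ∈ univ.filter (fun k => P k ≤ P j), y k

/-- `y` strictly ordinally dominates `x` at profile `P`. -/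
def StrictDom {n : ℕ} (P : Fin n → Pref n) (y x : Assignment n) : Prop :=
  (∀ i, FOSD (P i) (y i) (x i)) ∧
  ∃ i j, ∑ k ∈ univ.filter (fun k => P i k ≤ P i j), x i k <
         ∑ k ∈ univ.filter (fun k => P i k ≤ P i j), y i k

/-- `x` is ordinally efficient at profile `P`. -/
def OrdEffAt {n : ℕ} (P : Fin n → Pref n) (x : Assignment n) : Prop :=
  ¬ ∃ y, BiStochastic y ∧ StrictDom P y x

/-- An ordinally efficient mechanism. -/
def OrdEff {n : ℕ} (φ : Mechanism n) : Prop := ∀ P, OrdEffAt P (φ P)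

/-- Symmetry (equal treatment of equals). -/
def SymmetricMech {n : ℕ} (φ : Mechanism n) : Prop :=
  ∀ P (i i' : Fin n), P i = P i' → φ P i = φ P i'

/-- Anonymity: exchanging two agents' reports exchanges their assignment vectors. -/
def Anonymous {n : ℕ} (φ : Mechanism n) : Prop :=
  ∀ P (i i' : Fin n), φ P i = φ (fun k => P (Equiv.swap i i' k)) i'

/-- Neutrality: relabeling objects via `π` relabels the assignment columns. -/
def Neutral {n : ℕ} (φ : Mechanism n) : Prop :=
  ∀ P (π : Equiv.Perm (Fin n)) (i j : Fin n),
    φ (fun k => π.symm.trans (P k)) i (π j) = φ P i j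

/-- Non-bossiness. -/
def NonBossy {n : ℕ} (φ : Mechanism n) : Prop :=
  ∀ (P : Fin n → Pref n) (i : Fin n) (P' : Pref n),
    φ (Function.update P i P') i = φ P i →
    φ (Function.update P i P') = φ P

/-- Objects: `a = 0`, `b = 1`, `c = 2`, `d = 3`. Preference orders as rank functions. -/
noncomputable def pABCD : Pref 4 := Equiv.ofBijective ![0, 1, 2, 3] (by decide)
noncomputable def pABDC : Pref 4 := Equiv.ofBijective ![0, 1, 3, 2] (by decide)
noncomputable def pADBC : Pref 4 := Equiv.ofBijective ![0, 2, 3, 1] (by decide)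
noncomputable def pBACD : Pref 4 := Equiv.ofBijective ![1, 0, 2, 3] (by decide)
noncomputable def pBADC : Pref 4 := Equiv.ofBijective ![1, 0, 3, 2] (by decide)
noncomputable def pBDCA : Pref 4 := Equiv.ofBijective ![3, 0, 2, 1] (by decide)
noncomputable def pDBCA : Pref 4 := Equiv.ofBijective ![3, 1, 2, 0] (by decide)

/-!
Symmetry forces equal division at the unanimous profile. When agent 4 (index `3`) swaps `c`
and `d`, upper invariance keeps her shares of `a` and `b` at `1/4`, and symmetry together with
the column sums gives agents 1–3 shares of `1/4` of `a` and `b` as well. Whatever the split of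
`c` and `d`, the claimed assignment then weakly first-order stochastically dominates the
mechanism's output for every agent. Ordinal efficiency turns this weak domination into equality
of all cumulative sums, and cumulative sums along a strict order determine the vector.
-/

def upperSum {n : ℕ} (P : Pref n) (x : Fin n → ℝ) (j : Fin n) : ℝ :=
  ∑ k ∈ univ.filter (fun k => P k ≤ P j), x k

lemma upperSum_eq_add_sum_lt {n : ℕ} (P : Pref n) (x : Fin n → ℝ) (j : Fin n) :
    upperSum P x j = x j + ∑ k ∈ univ.filter (fun k => P k < P j), x k := by
  have : univ.filter (fun k => P k ≤ P j) = insert j (univ.filter (fun k => P k < P j)) := by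
    ext k; simp [le_iff_lt_or_eq, or_comm]
  rw [upperSum, this, sum_insert (by simp)]

lemma eq_of_upperSum_eq {n : ℕ} (P : Pref n) {x y : Fin n → ℝ}
    (h : ∀ j, upperSum P x j = upperSum P y j) : x = y := by
  suffices ∀ r, x (P.symm r) = y (P.symm r) by
    funext j; simpa using this (P j)
  intro r
  induction r using WellFoundedLT.induction with
  | _ r ih =>
    have hlt : ∑ k ∈ univ.filter (fun k => P k < r), x k =
        ∑ k ∈ univ.filter (fun k => P k < r), y k :=
      sum_congr rfl fun k hk => by simpa using ih (P k) (mem_filter.1 hk).2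
    have := h (P.symm r)
    rw [upperSum_eq_add_sum_lt, upperSum_eq_add_sum_lt] at this
    simp only [Equiv.apply_symm_apply] at this
    linarith

lemma OrdEffAt.eq_of_forall_fosd {n : ℕ} {P : Fin n → Pref n} {x y : Assignment n}
    (hx : OrdEffAt P x) (hy : BiStochastic y) (hdom : ∀ i, FOSD (P i) (y i) (x i)) :
    x = y := by
  funext i
  refine eq_of_upperSum_eq (P i) fun j => le_antisymm (hdom i j) (not_lt.1 fun hlt => ?_)
  exact hx ⟨y, hy, hdom, i, j, hlt⟩

lemma SymmetricMech.apply_const {n : ℕ} {φ : Mechanism n} (hS : SymmetricMech φ)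
    (hV : ValidMech φ) (p : Pref n) (i j : Fin n) : φ (fun _ => p) i j = (n : ℝ)⁻¹ := by
  have hcol := (hV fun _ => p).2.2 j
  rw [sum_congr rfl fun i' _ => congrFun (hS _ i' i rfl) j, sum_const, card_univ,
    Fintype.card_fin, nsmul_eq_mul] at hcol
  exact eq_inv_of_mul_eq_one_right hcol

noncomputable def profileII : Fin 4 → Pref 4 := fun k => if k = 3 then pABDC else pABCD

noncomputable def assignmentII : Assignment 4 := fun i =>
  if i = 3 then ![1 / 4, 1 / 4, 0, 1 / 2] else ![1 / 4, 1 / 4, 1 / 3, 1 / 6]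

lemma biStochastic_assignmentII : BiStochastic assignmentII := by
  refine ⟨?_, ?_, ?_⟩
  · intro i j; fin_cases i <;> fin_cases j <;> norm_num +decide [assignmentII]
  · intro i; fin_cases i <;> norm_num +decide [assignmentII, Fin.sum_univ_succ]
  · intro j; fin_cases j <;> norm_num +decide [assignmentII, Fin.sum_univ_succ]

lemma fosd_assignmentII {x : Assignment 4} (hx : BiStochastic x) (h1 : x 1 = x 0)
    (h2 : x 2 = x 0) (ha : x 3 0 = 4⁻¹) (hb : x 3 1 = 4⁻¹) (i : Fin 4) :
    FOSD (profileII i) (assignmentII i) (x i) := by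
  obtain ⟨hnn, hrow, hcol⟩ := hx
  simp only [Fin.sum_univ_four, h1, h2] at hrow hcol
  intro j
  fin_cases i <;> fin_cases j <;>
    simp only [profileII, assignmentII, pABCD, pABDC, Equiv.ofBijective_apply, sum_filter,
      Fin.sum_univ_four, h1, h2, Fin.reduceFinMk, Fin.reduceEq, Fin.reduceLE, ↓reduceIte,
      Matrix.cons_val, Matrix.cons_val_zero, Matrix.cons_val_one] <;>
    linarith [hnn 3 2, hrow 0, hrow 3, hcol 0, hcol 1, hcol 2]

lemma adjSwap_pABCD_pABDC : AdjSwap pABCD pABDC 2 3 := ⟨rfl, by ext k; fin_cases k <;> rfl⟩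

lemma update_const_pABCD : Function.update (fun _ => pABCD) 3 pABDC = profileII := by
  funext k
  by_cases hk : k = 3 <;> simp [profileII, hk]

theorem profile_II (φ : Mechanism 4)
    (hV : ValidMech φ) (hUI : UpperInvariant φ) (hOE : OrdEff φ) (hS : SymmetricMech φ) :
    ∀ i : Fin 4,
      φ (fun k => if k = 3 then pABDC else pABCD) i =
        if i = 3 then ![1 / 4, 1 / 4, 0, 1 / 2]
        else ![1 / 4, 1 / 4, 1 / 3, 1 / 6] := by
  have hquarter (k : Fin 4) (hk : pABCD k < pABCD 2) : φ profileII 3 k = 4⁻¹ := by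
    rw [← update_const_pABCD, hUI _ 3 2 3 pABDC adjSwap_pABCD_pABDC k hk]
    exact_mod_cast hS.apply_const hV pABCD 3 k
  have hsame (i : Fin 4) (hi : i ≠ 3) : φ profileII i = φ profileII 0 :=
    hS _ i 0 (by simp [profileII, hi])
  have hφ : φ profileII = assignmentII := by
    exact (hOE profileII).eq_of_forall_fosd biStochastic_assignmentII
      (fosd_assignmentII (hV profileII) (hsame 1 (by decide)) (hsame 2 (by decide))
        (hquarter 0 (by decide)) (hquarter 1 (by decide)))
  exact congrFun hφ
end

section
/- Let φ be an upper invariant, lower invariant, ordinally efficient, and symmetric mechanism on 4 agents and objects {a,b,c,d}. At the profile where agents 1,2,3 report a ≻ b ≻ c ≻ d and agent 4 reports a ≻ d ≻ b ≻ c, the assignment is: agents 1,2,3 each get (1/4, 1/3, 1/3, 1/12) for (a,b,c,d), and agent 4 gets (1/4, 0, 0, 3/4). -/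
open Finset

lemma trade {n : ℕ} (P : Fin n → Pref n) (x : Assignment n)
    (hx : BiStochastic x) {i1 i2 j1 j2 : Fin n}
    (h1 : P i1 j2 < P i1 j1) (h2 : P i2 j1 < P i2 j2)
    (p1 : 0 < x i1 j1) (p2 : 0 < x i2 j2) :
    ¬ OrdEffAt P x := by
  obtain ⟨hnn, hrow, hcol⟩ := hx
  have hi : i1 ≠ i2 := by rintro rfl; exact absurd h2 (lt_asymm h1)
  have hj : j1 ≠ j2 := by rintro rfl; exact lt_irrefl _ h1
  set ε := min (x i1 j1) (x i2 j2) with hε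
  have hε0 : 0 < ε := lt_min p1 p2
  have hε1 : ε ≤ x i1 j1 := min_le_left _ _
  have hε2 : ε ≤ x i2 j2 := min_le_right _ _
  set c : Fin n → ℝ := fun i => (if i = i1 then 1 else 0) - (if i = i2 then 1 else 0) with hc
  set g : Fin n → ℝ := fun j => (if j = j2 then 1 else 0) - (if j = j1 then 1 else 0) with hg
  set y : Assignment n := fun i j => x i j + ε * c i * g j with hy
  have sumg : ∀ (S : Finset (Fin n)), ∑ k ∈ S, g k =
      (if j2 ∈ S then (1:ℝ) else 0) - (if j1 ∈ S then 1 else 0) := by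
    intro S
    simp [hg, Finset.sum_sub_distrib]
  have key : ∀ i j, ∑ k ∈ univ.filter (fun k => P i k ≤ P i j), y i k
      = ∑ k ∈ univ.filter (fun k => P i k ≤ P i j), x i k
        + ε * c i * ((if P i j2 ≤ P i j then (1:ℝ) else 0) - (if P i j1 ≤ P i j then 1 else 0)) := by
    intro i j
    rw [hy]
    simp only []
    rw [Finset.sum_add_distrib, ← Finset.mul_sum, sumg]
    simp [Finset.mem_filter]
  have hbi : BiStochastic y := by
    refine ⟨?_, ?_, ?_⟩
    · intro i j
      show 0 ≤ x i j + ε * c i * g j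
      rcases eq_or_ne i i1 with h | h
      · have hci : c i = 1 := by simp [hc, h, hi, Ne.symm hi]
        rcases eq_or_ne j j1 with h' | h'
        · have hgj : g j = -1 := by simp [hg, h', hj, Ne.symm hj]
          have hxx : x i j = x i1 j1 := by rw [h, h']
          rw [hci, hgj, hxx]; linarith
        · rcases eq_or_ne j j2 with h'' | h''
          · have hgj : g j = 1 := by simp [hg, h'', hj, Ne.symm hj]
            rw [hci, hgj]; have := hnn i j; linarith
          · have hgj : g j = 0 := by simp [hg, h', h'']
            rw [hgj, mul_zero]; have := hnn i j; linarith
      · rcases eq_or_ne i i2 with h2' | h2'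
        · have hci : c i = -1 := by simp [hc, h, h2', hi, Ne.symm hi]
          rcases eq_or_ne j j2 with h' | h'
          · have hgj : g j = 1 := by simp [hg, h', hj, Ne.symm hj]
            have hxx : x i j = x i2 j2 := by rw [h2', h']
            rw [hci, hgj, hxx]; linarith
          · rcases eq_or_ne j j1 with h'' | h''
            · have hgj : g j = -1 := by simp [hg, h'', hj, Ne.symm hj]
              rw [hci, hgj]; have := hnn i j; linarith
            · have hgj : g j = 0 := by simp [hg, h', h'']
              rw [hgj, mul_zero]; have := hnn i j; linarith
        · have hci : c i = 0 := by simp [hc, h, h2', hi, Ne.symm hi]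
          rw [hci, mul_zero, zero_mul]; have := hnn i j; linarith
    · intro i
      show ∑ j, (x i j + ε * c i * g j) = 1
      rw [Finset.sum_add_distrib, ← Finset.mul_sum, sumg]
      simp [hrow i]
    · intro j
      show ∑ i, (x i j + ε * c i * g j) = 1
      rw [Finset.sum_add_distrib]
      have e1 : ∑ i, ε * c i * g j = (∑ i, c i) * (ε * g j) := by
        rw [Finset.sum_mul]; congr 1; ext i; ring
      have e2 : ∑ i, c i = 0 := by simp [hc, Finset.sum_sub_distrib]
      rw [e1, e2, hcol j]; ring
  have hfosd : ∀ i, FOSD (P i) (y i) (x i) := by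
    intro i j
    rw [key]
    rcases eq_or_ne i i1 with h | h
    · have hci : c i = 1 := by simp [hc, h, hi, Ne.symm hi]
      have h1' : P i j2 < P i j1 := by rw [h]; exact h1
      rw [hci]
      rcases le_or_gt (P i j1) (P i j) with hle | hlt
      · rw [if_pos hle, if_pos (le_of_lt (lt_of_lt_of_le h1' hle))]
        have : ε * 1 * ((1:ℝ) - 1) = 0 := by ring
        linarith
      · rw [if_neg (not_le.mpr hlt)]
        rcases le_or_gt (P i j2) (P i j) with hle' | hlt'
        · rw [if_pos hle']
          have : ε * 1 * ((1:ℝ) - 0) = ε := by ring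
          linarith
        · rw [if_neg (not_le.mpr hlt')]
          have : ε * 1 * ((0:ℝ) - 0) = 0 := by ring
          linarith
    · rcases eq_or_ne i i2 with h2' | h2'
      · have hci : c i = -1 := by simp [hc, h, h2', hi, Ne.symm hi]
        have h2'' : P i j1 < P i j2 := by rw [h2']; exact h2
        rw [hci]
        rcases le_or_gt (P i j2) (P i j) with hle | hlt
        · rw [if_pos hle, if_pos (le_of_lt (lt_of_lt_of_le h2'' hle))]
          have : ε * (-1) * ((1:ℝ) - 1) = 0 := by ring
          linarith
        · rw [if_neg (not_le.mpr hlt)]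
          rcases le_or_gt (P i j1) (P i j) with hle' | hlt'
          · rw [if_pos hle']
            have : ε * (-1) * ((0:ℝ) - 1) = ε := by ring
            linarith
          · rw [if_neg (not_le.mpr hlt')]
            have : ε * (-1) * ((0:ℝ) - 0) = 0 := by ring
            linarith
      · have hci : c i = 0 := by simp [hc, h, h2', hi, Ne.symm hi]
        rw [hci]
        have : ε * 0 * ((if P i j2 ≤ P i j then (1:ℝ) else 0) - (if P i j1 ≤ P i j then 1 else 0)) = 0 := by
          ring
        linarith
  intro hOE
  apply hOE
  refine ⟨y, hbi, hfosd, i1, j2, ?_⟩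
  rw [key]
  have hci : c i1 = 1 := by simp [hc, hi, Ne.symm hi]
  rw [hci, if_pos (le_refl _), if_neg (not_le.mpr h1)]
  have : ε * 1 * ((1:ℝ) - 0) = ε := by ring
  linarith

theorem profile_III (φ : Mechanism 4)
    (hV : ValidMech φ) (hUI : UpperInvariant φ) (hLI : LowerInvariant φ)
    (hOE : OrdEff φ) (hS : SymmetricMech φ) :
    ∀ i : Fin 4,
      φ (fun k => if k = 3 then pADBC else pABCD) i =
        if i = 3 then ![1 / 4, 0, 0, 3 / 4]
        else ![1 / 4, 1 / 3, 1 / 3, 1 / 12] := by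
  set P1 : Fin 4 → Pref 4 := fun _ => pABCD with hP1
  set P2 : Fin 4 → Pref 4 := Function.update P1 3 pABDC with hP2
  set P3 : Fin 4 → Pref 4 := Function.update P2 3 pADBC with hP3
  -- profiles' values
  have hP2v : ∀ i : Fin 4, i ≠ 3 → P2 i = pABCD := by
    intro i hi; rw [hP2, Function.update_of_ne hi]
  have hP23 : P2 3 = pABDC := by rw [hP2, Function.update_self]
  have hP3v : ∀ i : Fin 4, i ≠ 3 → P3 i = pABCD := by
    intro i hi; rw [hP3, Function.update_of_ne hi]; exact hP2v i hi
  have hP33 : P3 3 = pADBC := by rw [hP3, Function.update_self]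
  -- Step 1 : uniform at P1
  obtain ⟨nn1, row1, col1⟩ := hV P1
  have eq1 : ∀ i : Fin 4, φ P1 i = φ P1 0 := fun i => hS P1 i 0 rfl
  have u1 : ∀ i j, φ P1 i j = 1/4 := by
    intro i j
    have hc := col1 j
    rw [Fin.sum_univ_four, eq1 1, eq1 2, eq1 3] at hc
    rw [eq1 i]; linarith
  -- Step 2 : profile P2
  have adj1 : AdjSwap (P1 3) pABDC 2 3 := by
    constructor
    · decide
    · apply Equiv.ext; decide
  obtain ⟨nn2, row2, col2⟩ := hV P2
  have eq2 : ∀ i : Fin 4, i ≠ 3 → φ P2 i = φ P2 0 := fun i hi =>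
    hS P2 i 0 (by rw [hP2v i hi, hP2v 0 (by decide)])
  have h2a : φ P2 3 0 = 1/4 := by
    rw [hUI P1 3 2 3 pABDC adj1 0 (by decide)]; exact u1 3 0
  have h2b : φ P2 3 1 = 1/4 := by
    rw [hUI P1 3 2 3 pABDC adj1 1 (by decide)]; exact u1 3 1
  have h2c : φ P2 3 2 = 0 := by
    by_contra hne
    have hpos : 0 < φ P2 3 2 := lt_of_le_of_ne (nn2 3 2) (Ne.symm hne)
    have hrow3 := row2 3
    rw [Fin.sum_univ_four, h2a, h2b] at hrow3
    have hcol3 := col2 3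
    rw [Fin.sum_univ_four, eq2 1 (by decide), eq2 2 (by decide)] at hcol3
    have hpos0 : 0 < φ P2 0 3 := by
      have := nn2 3 3
      linarith
    refine trade P2 (φ P2) (hV P2) (i1 := 3) (i2 := 0) (j1 := 2) (j2 := 3)
      ?_ ?_ hpos hpos0 (hOE P2)
    · rw [hP23]; decide
    · rw [hP2v 0 (by decide)]; decide
  -- Step 3 : profile P3
  have adj2 : AdjSwap (P2 3) pADBC 1 3 := by
    rw [hP23]
    constructor
    · decide
    · apply Equiv.ext; decide
  obtain ⟨nn3, row3, col3⟩ := hV P3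
  have eq3 : ∀ i : Fin 4, i ≠ 3 → φ P3 i = φ P3 0 := fun i hi =>
    hS P3 i 0 (by rw [hP3v i hi, hP3v 0 (by decide)])
  have h3a : φ P3 3 0 = 1/4 := by
    rw [hUI P2 3 1 3 pADBC adj2 0 (by rw [hP23]; decide)]; exact h2a
  have h3c : φ P3 3 2 = 0 := by
    rw [hLI P2 3 1 3 pADBC adj2 2 (by rw [hP23]; decide)]; exact h2c
  have h3b : φ P3 3 1 = 0 := by
    by_contra hne
    have hpos : 0 < φ P3 3 1 := lt_of_le_of_ne (nn3 3 1) (Ne.symm hne)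
    have hrow3 := row3 3
    rw [Fin.sum_univ_four, h3a, h3c] at hrow3
    have hcol3 := col3 3
    rw [Fin.sum_univ_four, eq3 1 (by decide), eq3 2 (by decide)] at hcol3
    have hpos0 : 0 < φ P3 0 3 := by linarith
    refine trade P3 (φ P3) (hV P3) (i1 := 3) (i2 := 0) (j1 := 1) (j2 := 3)
      ?_ ?_ hpos hpos0 (hOE P3)
    · rw [hP33]; decide
    · rw [hP3v 0 (by decide)]; decide
  have h3d : φ P3 3 3 = 3/4 := by
    have := row3 3
    rw [Fin.sum_univ_four, h3a, h3b, h3c] at this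
    linarith
  -- row 0 values
  have r0 : ∀ j, φ P3 0 j = ![1/4, 1/3, 1/3, (1:ℝ)/12] j := by
    intro j
    have hc := col3 j
    rw [Fin.sum_univ_four, eq3 1 (by decide), eq3 2 (by decide)] at hc
    fin_cases j <;> simp_all <;> linarith
  -- conclude
  have hPeq : (fun k : Fin 4 => if k = 3 then pADBC else pABCD) = P3 := by
    funext k
    by_cases hk : k = 3
    · subst hk; rw [if_pos rfl, hP33]
    · rw [if_neg hk, hP3v k hk]
  rw [hPeq]
  intro i
  by_cases hi : i = 3
  · subst hi
    rw [if_pos rfl]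
    funext j
    fin_cases j
    · simpa using h3a
    · simpa using h3b
    · simpa using h3c
    · simpa using h3d
  · rw [if_neg hi, eq3 i hi]
    funext j
    exact r0 j
end

section
/- Let φ be an upper invariant, lower invariant, ordinally efficient, and symmetric mechanism on 4 agents and objects {a,b,c,d}. At the profile where agents 1,2 report a ≻ b ≻ c ≻ d, agent 3 reports b ≻ a ≻ d ≻ c, and agent 4 reports a ≻ d ≻ b ≻ c, there exists x ∈ [0, 1/12] such that the assignment is: agents 1,2 each get (1/3, 5/24, 11/24, 0) for (a,b,c,d), agent 3 gets (0, 7/12, x, 5/12 − x), and agent 4 gets (1/3, 0, 1/12 − x, 7/12 + x). In particular, agent 3's probability for object c is at most 1/12. -/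
open Finset

lemma notrade {n : ℕ} (P : Fin n → Pref n) (x : Assignment n) (hx : BiStochastic x)
    (hoe : OrdEffAt P x) (i1 i2 j j' : Fin n) (hi : i1 ≠ i2)
    (h1 : P i1 j' < P i1 j) (h2 : P i2 j < P i2 j') :
    x i1 j = 0 ∨ x i2 j' = 0 := by
  obtain ⟨hnn, hrow, hcol⟩ := hx
  by_contra hcon
  push_neg at hcon
  obtain ⟨hp, hq⟩ := hcon
  have hp : 0 < x i1 j := lt_of_le_of_ne (hnn _ _) (Ne.symm hp)
  have hq : 0 < x i2 j' := lt_of_le_of_ne (hnn _ _) (Ne.symm hq)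
  set ε : ℝ := min (x i1 j) (x i2 j') with hεdef
  have hε : 0 < ε := lt_min hp hq
  have hε1 : ε ≤ x i1 j := min_le_left _ _
  have hε2 : ε ≤ x i2 j' := min_le_right _ _
  have hjj : j ≠ j' := by rintro rfl; exact lt_irrefl _ h1
  set E : Fin n → ℝ := fun k => (if k = j' then ε else 0) - (if k = j then ε else 0) with hE
  set C : Fin n → ℝ := fun i => (if i = i1 then 1 else 0) - (if i = i2 then 1 else 0) with hC
  set y : Assignment n := fun i k => x i k + C i * E k with hy
  have hCi1 : C i1 = 1 := by simp [hC, hi]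
  have hCi2 : C i2 = -1 := by simp [hC, Ne.symm hi]
  have hCo : ∀ i, i ≠ i1 → i ≠ i2 → C i = 0 := by intro i h h'; simp [hC, h, h']
  have hEj : E j = -ε := by simp [hE, hjj]
  have hEj' : E j' = ε := by simp [hE, Ne.symm hjj]
  have hEo : ∀ k, k ≠ j → k ≠ j' → E k = 0 := by intro k h h'; simp [hE, h, h']
  have hEbound : ∀ k, -ε ≤ E k ∧ E k ≤ ε := by
    intro k; constructor <;> (simp only [hE]; split_ifs <;> linarith)
  have hEsum : ∑ k, E k = 0 := by
    simp [hE, Finset.sum_sub_distrib, Finset.sum_ite_eq']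
  have hCsum : ∑ i, C i = 0 := by
    simp [hC, Finset.sum_sub_distrib, Finset.sum_ite_eq']
  have hEpart : ∀ (i : Fin n) (t : Fin n),
      ∑ k ∈ univ.filter (fun k => P i k ≤ P i t), E k =
        (if P i j' ≤ P i t then ε else 0) - (if P i j ≤ P i t then ε else 0) := by
    intro i t
    rw [hE, Finset.sum_sub_distrib,
      Finset.sum_ite_eq' _ j' (fun _ => ε), Finset.sum_ite_eq' _ j (fun _ => ε)]
    simp [Finset.mem_filter]
  have hybi : BiStochastic y := by
    refine ⟨?_, ?_, ?_⟩
    · intro i k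
      have : y i k = x i k + C i * E k := rfl
      rw [this]
      rcases eq_or_ne i i1 with h | hA
      · subst h
        rcases eq_or_ne k j with h | hB
        · subst h; rw [hCi1, hEj]; linarith
        · rcases eq_or_ne k j' with h | hB'
          · subst h; rw [hCi1, hEj']; have := hnn i k; linarith
          · rw [hEo k hB hB']; have := hnn i k; linarith
      · rcases eq_or_ne i i2 with h | hA2
        · subst h
          rcases eq_or_ne k j' with h | hB
          · subst h; rw [hCi2, hEj']; linarith
          · rcases eq_or_ne k j with h | hB'
            · subst h; rw [hCi2, hEj]; have := hnn i k; linarith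
            · rw [hEo k hB' hB]; have := hnn i k; linarith
        · rw [hCo i hA hA2]; have := hnn i k; linarith
    · intro i
      have : ∑ k, y i k = (∑ k, x i k) + C i * ∑ k, E k := by
        rw [hy]; simp only; rw [Finset.sum_add_distrib, ← Finset.mul_sum]
      rw [this, hEsum, hrow i]; ring
    · intro k
      have : ∑ i, y i k = (∑ i, x i k) + (∑ i, C i) * E k := by
        rw [hy]; simp only; rw [Finset.sum_add_distrib, ← Finset.sum_mul]
      rw [this, hCsum, hcol k]; ring
  have hsum : ∀ (i : Fin n) (t : Fin n),
      ∑ k ∈ univ.filter (fun k => P i k ≤ P i t), y i k =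
        (∑ k ∈ univ.filter (fun k => P i k ≤ P i t), x i k) + C i *
        ((if P i j' ≤ P i t then ε else 0) - (if P i j ≤ P i t then ε else 0)) := by
    intro i t
    rw [hy]; simp only
    rw [Finset.sum_add_distrib, ← Finset.mul_sum, hEpart]
  apply hoe
  refine ⟨y, hybi, ?_, ⟨i1, j', ?_⟩⟩
  · intro i t
    rw [hsum i t]
    have key : 0 ≤ C i * ((if P i j' ≤ P i t then ε else 0) - (if P i j ≤ P i t then ε else 0)) := by
      rcases eq_or_ne i i1 with h | hA
      · subst h; rw [hCi1]
        split_ifs with hA hB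
        · linarith
        · linarith
        · exact absurd (le_of_lt (lt_of_lt_of_le h1 ‹_›)) hA
        · linarith
      · rcases eq_or_ne i i2 with h | hA2
        · subst h; rw [hCi2]
          split_ifs with hA hB
          · linarith
          · exact absurd (le_of_lt (lt_of_lt_of_le h2 ‹_›)) hB
          · linarith
          · linarith
        · rw [hCo i hA hA2]; ring_nf; linarith
    linarith
  · rw [hsum i1 j']
    rw [hCi1, if_pos (le_refl _), if_neg (not_le_of_gt h1)]
    linarith

noncomputable def Prof (s t : Pref 4) : Fin 4 → Pref 4 :=
  fun k => if k = 2 then s else if k = 3 then t else pABCD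

lemma L00 (φ : Mechanism 4) (hV : ValidMech φ) (hS : SymmetricMech φ) :
    ∀ i j, φ (Prof pABCD pABCD) i j = 1/4 := by
  intro i j
  obtain ⟨hnn, hrow, hcol⟩ := hV (Prof pABCD pABCD)
  have cj := hcol j
  rw [Fin.sum_univ_four] at cj
  have hP : ∀ i, Prof pABCD pABCD i = pABCD := by
    intro i; unfold Prof; split_ifs <;> rfl
  have e1 := congrFun (hS (Prof pABCD pABCD) 0 1 rfl) j
  have e2 := congrFun (hS (Prof pABCD pABCD) 0 2 rfl) j
  have e3 := congrFun (hS (Prof pABCD pABCD) 0 3 rfl) j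
  have e := congrFun (hS (Prof pABCD pABCD) 0 i (by rw [hP, hP])) j
  linarith

lemma L10 (φ : Mechanism 4) (hV : ValidMech φ) (hUI : UpperInvariant φ)
    (hLI : LowerInvariant φ) (hOE : OrdEff φ) (hS : SymmetricMech φ) :
    φ (Prof pBACD pABCD) 2 0 = 0 ∧ φ (Prof pBACD pABCD) 2 1 = 1/2 ∧
    φ (Prof pBACD pABCD) 3 0 = 1/3 ∧ φ (Prof pBACD pABCD) 3 1 = 1/6 := by
  have hupd : Function.update (Prof pABCD pABCD) 2 pBACD = Prof pBACD pABCD := by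
    funext k; fin_cases k <;> simp [Prof, Function.update]
  have hsw : AdjSwap (Prof pABCD pABCD 2) pBACD 0 1 :=
    ⟨by decide, by ext z; fin_cases z <;> rfl⟩
  have hL := hLI (Prof pABCD pABCD) 2 0 1 pBACD hsw
  rw [hupd] at hL
  have l2 : φ (Prof pBACD pABCD) 2 2 = 1/4 := by
    rw [hL 2 (by decide)]; exact L00 φ hV hS 2 2
  have l3 : φ (Prof pBACD pABCD) 2 3 = 1/4 := by
    rw [hL 3 (by decide)]; exact L00 φ hV hS 2 3
  obtain ⟨hnn, hrow, hcol⟩ := hV (Prof pBACD pABCD)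
  have r2 := hrow 2
  have c0 := hcol 0
  have c1 := hcol 1
  rw [Fin.sum_univ_four] at r2 c0 c1
  have e1 : ∀ j, φ (Prof pBACD pABCD) 0 j = φ (Prof pBACD pABCD) 1 j :=
    fun j => congrFun (hS (Prof pBACD pABCD) 0 1 rfl) j
  have e3 : ∀ j, φ (Prof pBACD pABCD) 0 j = φ (Prof pBACD pABCD) 3 j :=
    fun j => congrFun (hS (Prof pBACD pABCD) 0 3 rfl) j
  have T := notrade (Prof pBACD pABCD) _ (hV _) (hOE _) 2 0 0 1
    (by decide) (by decide) (by decide)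
  rcases T with h | h
  · refine ⟨h, by linarith [e1 1, e3 1, hnn 2 0], ?_, ?_⟩
    · have := e1 0; have := e3 0; linarith [e1 1, e3 1]
    · have := e1 1; have := e3 1
      have h21 : φ (Prof pBACD pABCD) 2 1 = 1/2 := by linarith
      linarith
  · exfalso
    have := e1 1; have := e3 1
    linarith [hnn 2 0]

lemma L01 (φ : Mechanism 4) (hV : ValidMech φ) (hUI : UpperInvariant φ)
    (hLI : LowerInvariant φ) (hOE : OrdEff φ) (hS : SymmetricMech φ) :
    φ (Prof pABCD pABDC) 2 2 = 1/3 ∧ φ (Prof pABCD pABDC) 2 3 = 1/6 ∧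
    φ (Prof pABCD pABDC) 3 0 = 1/4 ∧ φ (Prof pABCD pABDC) 3 2 = 0 := by
  have hupd : Function.update (Prof pABCD pABCD) 3 pABDC = Prof pABCD pABDC := by
    funext k; fin_cases k <;> simp [Prof, Function.update]
  have hsw : AdjSwap (Prof pABCD pABCD 3) pABDC 2 3 :=
    ⟨by decide, by ext z; fin_cases z <;> rfl⟩
  have hU := hUI (Prof pABCD pABCD) 3 2 3 pABDC hsw
  rw [hupd] at hU
  have u0 : φ (Prof pABCD pABDC) 3 0 = 1/4 := by
    rw [hU 0 (by decide)]; exact L00 φ hV hS 3 0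
  have u1 : φ (Prof pABCD pABDC) 3 1 = 1/4 := by
    rw [hU 1 (by decide)]; exact L00 φ hV hS 3 1
  obtain ⟨hnn, hrow, hcol⟩ := hV (Prof pABCD pABDC)
  have r3 := hrow 3
  have c2 := hcol 2
  have c3 := hcol 3
  rw [Fin.sum_univ_four] at r3 c2 c3
  have e1 : ∀ j, φ (Prof pABCD pABDC) 0 j = φ (Prof pABCD pABDC) 1 j :=
    fun j => congrFun (hS (Prof pABCD pABDC) 0 1 rfl) j
  have e2 : ∀ j, φ (Prof pABCD pABDC) 0 j = φ (Prof pABCD pABDC) 2 j :=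
    fun j => congrFun (hS (Prof pABCD pABDC) 0 2 rfl) j
  have T := notrade (Prof pABCD pABDC) _ (hV _) (hOE _) 3 0 2 3
    (by decide) (by decide) (by decide)
  rcases T with h | h
  · have x33 : φ (Prof pABCD pABDC) 3 3 = 1/2 := by linarith
    have x23 : φ (Prof pABCD pABDC) 2 3 = 1/6 := by linarith [e1 3, e2 3]
    have x22 : φ (Prof pABCD pABDC) 2 2 = 1/3 := by linarith [e1 2, e2 2]
    exact ⟨x22, x23, u0, h⟩
  · exfalso
    have := e1 3; have := e2 3
    linarith [hnn 3 2]

lemma L20 (φ : Mechanism 4) (hV : ValidMech φ) (hUI : UpperInvariant φ)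
    (hLI : LowerInvariant φ) (hOE : OrdEff φ) (hS : SymmetricMech φ) :
    φ (Prof pBADC pABCD) 3 0 = 1/3 ∧ φ (Prof pBADC pABCD) 3 1 = 1/6 := by
  obtain ⟨a0, a1, a2, a3⟩ := L10 φ hV hUI hLI hOE hS
  have hupd : Function.update (Prof pBACD pABCD) 2 pBADC = Prof pBADC pABCD := by
    funext k; fin_cases k <;> simp [Prof, Function.update]
  have hsw : AdjSwap (Prof pBACD pABCD 2) pBADC 2 3 :=
    ⟨by decide, by ext z; fin_cases z <;> rfl⟩
  have hU := hUI (Prof pBACD pABCD) 2 2 3 pBADC hsw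
  rw [hupd] at hU
  have u0 : φ (Prof pBADC pABCD) 2 0 = 0 := by rw [hU 0 (by decide)]; exact a0
  have u1 : φ (Prof pBADC pABCD) 2 1 = 1/2 := by rw [hU 1 (by decide)]; exact a1
  obtain ⟨hnn, hrow, hcol⟩ := hV (Prof pBADC pABCD)
  have r2 := hrow 2
  have c0 := hcol 0
  have c1 := hcol 1
  have c3 := hcol 3
  rw [Fin.sum_univ_four] at r2 c0 c1 c3
  have e1 : ∀ j, φ (Prof pBADC pABCD) 0 j = φ (Prof pBADC pABCD) 1 j :=
    fun j => congrFun (hS (Prof pBADC pABCD) 0 1 rfl) j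
  have e3 : ∀ j, φ (Prof pBADC pABCD) 0 j = φ (Prof pBADC pABCD) 3 j :=
    fun j => congrFun (hS (Prof pBADC pABCD) 0 3 rfl) j
  have T := notrade (Prof pBADC pABCD) _ (hV _) (hOE _) 2 0 2 3
    (by decide) (by decide) (by decide)
  rcases T with h | h
  · constructor
    · linarith [e1 0, e3 0]
    · have x23 : φ (Prof pBADC pABCD) 2 3 = 1/2 := by linarith
      linarith [e1 1, e3 1]
  · exfalso
    have := e1 3; have := e3 3
    linarith [hnn 2 2]

lemma L02 (φ : Mechanism 4) (hV : ValidMech φ) (hUI : UpperInvariant φ)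
    (hLI : LowerInvariant φ) (hOE : OrdEff φ) (hS : SymmetricMech φ) :
    φ (Prof pABCD pADBC) 2 2 = 1/3 ∧ φ (Prof pABCD pADBC) 2 3 = 1/12 := by
  obtain ⟨b22, b23, b30, b32⟩ := L01 φ hV hUI hLI hOE hS
  have hupd : Function.update (Prof pABCD pABDC) 3 pADBC = Prof pABCD pADBC := by
    funext k; fin_cases k <;> simp [Prof, Function.update]
  have hsw : AdjSwap (Prof pABCD pABDC 3) pADBC 1 3 :=
    ⟨by decide, by ext z; fin_cases z <;> rfl⟩
  have hU := hUI (Prof pABCD pABDC) 3 1 3 pADBC hsw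
  have hL := hLI (Prof pABCD pABDC) 3 1 3 pADBC hsw
  rw [hupd] at hU hL
  have u0 : φ (Prof pABCD pADBC) 3 0 = 1/4 := by rw [hU 0 (by decide)]; exact b30
  have l2 : φ (Prof pABCD pADBC) 3 2 = 0 := by rw [hL 2 (by decide)]; exact b32
  obtain ⟨hnn, hrow, hcol⟩ := hV (Prof pABCD pADBC)
  have r3 := hrow 3
  have c2 := hcol 2
  have c3 := hcol 3
  rw [Fin.sum_univ_four] at r3 c2 c3
  have e1 : ∀ j, φ (Prof pABCD pADBC) 0 j = φ (Prof pABCD pADBC) 1 j :=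
    fun j => congrFun (hS (Prof pABCD pADBC) 0 1 rfl) j
  have e2 : ∀ j, φ (Prof pABCD pADBC) 0 j = φ (Prof pABCD pADBC) 2 j :=
    fun j => congrFun (hS (Prof pABCD pADBC) 0 2 rfl) j
  have x22 : φ (Prof pABCD pADBC) 2 2 = 1/3 := by linarith [e1 2, e2 2]
  have T := notrade (Prof pABCD pADBC) _ (hV _) (hOE _) 3 0 1 3
    (by decide) (by decide) (by decide)
  rcases T with h | h
  · have x33 : φ (Prof pABCD pADBC) 3 3 = 3/4 := by linarith
    exact ⟨x22, by linarith [e1 3, e2 3]⟩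
  · exfalso
    have := e1 3; have := e2 3
    linarith [hnn 3 1]

lemma L11 (φ : Mechanism 4) (hV : ValidMech φ) (hUI : UpperInvariant φ)
    (hLI : LowerInvariant φ) (hOE : OrdEff φ) (hS : SymmetricMech φ) :
    φ (Prof pBACD pABDC) 2 0 = 0 ∧ φ (Prof pBACD pABDC) 2 1 = 1/2 ∧
    φ (Prof pBACD pABDC) 3 0 = 1/3 ∧ φ (Prof pBACD pABDC) 3 2 = 0 := by
  obtain ⟨a0, a1, a2, a3⟩ := L10 φ hV hUI hLI hOE hS
  obtain ⟨b22, b23, b30, b32⟩ := L01 φ hV hUI hLI hOE hS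
  -- agent 3 swaps c,d starting from profile (BACD, ABCD-rest)
  have hupd1 : Function.update (Prof pBACD pABCD) 3 pABDC = Prof pBACD pABDC := by
    funext k; fin_cases k <;> simp [Prof, Function.update]
  have hsw1 : AdjSwap (Prof pBACD pABCD 3) pABDC 2 3 :=
    ⟨by decide, by ext z; fin_cases z <;> rfl⟩
  have hU1 := hUI (Prof pBACD pABCD) 3 2 3 pABDC hsw1
  rw [hupd1] at hU1
  have u30 : φ (Prof pBACD pABDC) 3 0 = 1/3 := by rw [hU1 0 (by decide)]; exact a2
  have u31 : φ (Prof pBACD pABDC) 3 1 = 1/6 := by rw [hU1 1 (by decide)]; exact a3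
  -- agent 2 swaps a,b starting from profile (ABCD, ABDC)
  have hupd2 : Function.update (Prof pABCD pABDC) 2 pBACD = Prof pBACD pABDC := by
    funext k; fin_cases k <;> simp [Prof, Function.update]
  have hsw2 : AdjSwap (Prof pABCD pABDC 2) pBACD 0 1 :=
    ⟨by decide, by ext z; fin_cases z <;> rfl⟩
  have hL2 := hLI (Prof pABCD pABDC) 2 0 1 pBACD hsw2
  rw [hupd2] at hL2
  have l22 : φ (Prof pBACD pABDC) 2 2 = 1/3 := by rw [hL2 2 (by decide)]; exact b22
  have l23 : φ (Prof pBACD pABDC) 2 3 = 1/6 := by rw [hL2 3 (by decide)]; exact b23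
  obtain ⟨hnn, hrow, hcol⟩ := hV (Prof pBACD pABDC)
  have r2 := hrow 2
  have c0 := hcol 0
  rw [Fin.sum_univ_four] at r2 c0
  have e1 : ∀ j, φ (Prof pBACD pABDC) 0 j = φ (Prof pBACD pABDC) 1 j :=
    fun j => congrFun (hS (Prof pBACD pABDC) 0 1 rfl) j
  have T1 := notrade (Prof pBACD pABDC) _ (hV _) (hOE _) 2 3 0 1
    (by decide) (by decide) (by decide)
  have T2 := notrade (Prof pBACD pABDC) _ (hV _) (hOE _) 3 2 2 3
    (by decide) (by decide) (by decide)
  have x20 : φ (Prof pBACD pABDC) 2 0 = 0 := by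
    rcases T1 with h | h
    · exact h
    · exfalso; linarith
  have x32 : φ (Prof pBACD pABDC) 3 2 = 0 := by
    rcases T2 with h | h
    · exact h
    · exfalso; linarith
  refine ⟨x20, by linarith, u30, x32⟩

lemma L21 (φ : Mechanism 4) (hV : ValidMech φ) (hUI : UpperInvariant φ)
    (hLI : LowerInvariant φ) (hOE : OrdEff φ) (hS : SymmetricMech φ) :
    φ (Prof pBADC pABDC) 3 0 = 1/3 ∧ φ (Prof pBADC pABDC) 3 2 = 0 := by
  obtain ⟨c20, c21, c30, c32⟩ := L11 φ hV hUI hLI hOE hS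
  obtain ⟨d30, d31⟩ := L20 φ hV hUI hLI hOE hS
  -- agent 2 swaps c,d starting from (BACD, ABDC)
  have hupd1 : Function.update (Prof pBACD pABDC) 2 pBADC = Prof pBADC pABDC := by
    funext k; fin_cases k <;> simp [Prof, Function.update]
  have hsw1 : AdjSwap (Prof pBACD pABDC 2) pBADC 2 3 :=
    ⟨by decide, by ext z; fin_cases z <;> rfl⟩
  have hU1 := hUI (Prof pBACD pABDC) 2 2 3 pBADC hsw1
  rw [hupd1] at hU1
  have u20 : φ (Prof pBADC pABDC) 2 0 = 0 := by rw [hU1 0 (by decide)]; exact c20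
  have u21 : φ (Prof pBADC pABDC) 2 1 = 1/2 := by rw [hU1 1 (by decide)]; exact c21
  -- agent 3 swaps c,d starting from (BADC, ABCD)
  have hupd2 : Function.update (Prof pBADC pABCD) 3 pABDC = Prof pBADC pABDC := by
    funext k; fin_cases k <;> simp [Prof, Function.update]
  have hsw2 : AdjSwap (Prof pBADC pABCD 3) pABDC 2 3 :=
    ⟨by decide, by ext z; fin_cases z <;> rfl⟩
  have hU2 := hUI (Prof pBADC pABCD) 3 2 3 pABDC hsw2
  rw [hupd2] at hU2
  have u30 : φ (Prof pBADC pABDC) 3 0 = 1/3 := by rw [hU2 0 (by decide)]; exact d30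
  have u31 : φ (Prof pBADC pABDC) 3 1 = 1/6 := by rw [hU2 1 (by decide)]; exact d31
  obtain ⟨hnn, hrow, hcol⟩ := hV (Prof pBADC pABDC)
  have r0 := hrow 0
  have c0 := hcol 0
  have c1 := hcol 1
  have c2 := hcol 2
  rw [Fin.sum_univ_four] at r0 c0 c1 c2
  have e1 : ∀ j, φ (Prof pBADC pABDC) 0 j = φ (Prof pBADC pABDC) 1 j :=
    fun j => congrFun (hS (Prof pBADC pABDC) 0 1 rfl) j
  have T2 := notrade (Prof pBADC pABDC) _ (hV _) (hOE _) 3 0 2 3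
    (by decide) (by decide) (by decide)
  rcases T2 with h | h
  · exact ⟨u30, h⟩
  · -- x03 = 0, hence x02 = 1/2 and column c forces x32 = 0
    have x00 : φ (Prof pBADC pABDC) 0 0 = 1/3 := by linarith [e1 0]
    have x01 : φ (Prof pBADC pABDC) 0 1 = 1/6 := by linarith [e1 1]
    have x02 : φ (Prof pBADC pABDC) 0 2 = 1/2 := by linarith
    refine ⟨u30, ?_⟩
    have := e1 2
    linarith [hnn 2 2, hnn 3 2]

lemma L12 (φ : Mechanism 4) (hV : ValidMech φ) (hUI : UpperInvariant φ)
    (hLI : LowerInvariant φ) (hOE : OrdEff φ) (hS : SymmetricMech φ) :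
    φ (Prof pBACD pADBC) 2 0 = 0 ∧ φ (Prof pBACD pADBC) 2 1 = 7/12 := by
  obtain ⟨c20, c21, c30, c32⟩ := L11 φ hV hUI hLI hOE hS
  obtain ⟨f22, f23⟩ := L02 φ hV hUI hLI hOE hS
  -- agent 3 swaps b,d starting from (BACD, ABDC)
  have hupd1 : Function.update (Prof pBACD pABDC) 3 pADBC = Prof pBACD pADBC := by
    funext k; fin_cases k <;> simp [Prof, Function.update]
  have hsw1 : AdjSwap (Prof pBACD pABDC 3) pADBC 1 3 :=
    ⟨by decide, by ext z; fin_cases z <;> rfl⟩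
  have hU1 := hUI (Prof pBACD pABDC) 3 1 3 pADBC hsw1
  have hL1 := hLI (Prof pBACD pABDC) 3 1 3 pADBC hsw1
  rw [hupd1] at hU1 hL1
  have u30 : φ (Prof pBACD pADBC) 3 0 = 1/3 := by rw [hU1 0 (by decide)]; exact c30
  have l32 : φ (Prof pBACD pADBC) 3 2 = 0 := by rw [hL1 2 (by decide)]; exact c32
  -- agent 2 swaps a,b starting from (ABCD, ADBC)
  have hupd2 : Function.update (Prof pABCD pADBC) 2 pBACD = Prof pBACD pADBC := by
    funext k; fin_cases k <;> simp [Prof, Function.update]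
  have hsw2 : AdjSwap (Prof pABCD pADBC 2) pBACD 0 1 :=
    ⟨by decide, by ext z; fin_cases z <;> rfl⟩
  have hL2 := hLI (Prof pABCD pADBC) 2 0 1 pBACD hsw2
  rw [hupd2] at hL2
  have l22 : φ (Prof pBACD pADBC) 2 2 = 1/3 := by rw [hL2 2 (by decide)]; exact f22
  have l23 : φ (Prof pBACD pADBC) 2 3 = 1/12 := by rw [hL2 3 (by decide)]; exact f23
  obtain ⟨hnn, hrow, hcol⟩ := hV (Prof pBACD pADBC)
  have r2 := hrow 2
  have c1 := hcol 1
  rw [Fin.sum_univ_four] at r2 c1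
  have e1 : ∀ j, φ (Prof pBACD pADBC) 0 j = φ (Prof pBACD pADBC) 1 j :=
    fun j => congrFun (hS (Prof pBACD pADBC) 0 1 rfl) j
  have T1 := notrade (Prof pBACD pADBC) _ (hV _) (hOE _) 3 2 1 3
    (by decide) (by decide) (by decide)
  have x31 : φ (Prof pBACD pADBC) 3 1 = 0 := by
    rcases T1 with h | h
    · exact h
    · exfalso; linarith
  have T2 := notrade (Prof pBACD pADBC) _ (hV _) (hOE _) 2 0 0 1
    (by decide) (by decide) (by decide)
  rcases T2 with h | h
  · exact ⟨h, by linarith⟩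
  · exfalso
    have := e1 1
    linarith [hnn 2 0]

theorem profile_VIII (φ : Mechanism 4)
    (hV : ValidMech φ) (hUI : UpperInvariant φ) (hLI : LowerInvariant φ)
    (hOE : OrdEff φ) (hS : SymmetricMech φ) :
    ∃ x : ℝ, 0 ≤ x ∧ x ≤ 1 / 12 ∧
      (∀ i : Fin 4,
        φ (fun k => if k = 2 then pBADC else if k = 3 then pADBC else pABCD) i =
          if i = 2 then ![0, 7 / 12, x, 5 / 12 - x]
          else if i = 3 then ![1 / 3, 0, 1 / 12 - x, 7 / 12 + x]
          else ![1 / 3, 5 / 24, 11 / 24, 0]) ∧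
      φ (fun k => if k = 2 then pBADC else if k = 3 then pADBC else pABCD) 2 2 ≤
        1 / 12 := by
  obtain ⟨g20, g21⟩ := L12 φ hV hUI hLI hOE hS
  obtain ⟨h30, h32⟩ := L21 φ hV hUI hLI hOE hS
  -- agent 2 swaps c,d starting from (BACD, ADBC)
  have hupd1 : Function.update (Prof pBACD pADBC) 2 pBADC = Prof pBADC pADBC := by
    funext k; fin_cases k <;> simp [Prof, Function.update]
  have hsw1 : AdjSwap (Prof pBACD pADBC 2) pBADC 2 3 :=
    ⟨by decide, by ext z; fin_cases z <;> rfl⟩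
  have hU1 := hUI (Prof pBACD pADBC) 2 2 3 pBADC hsw1
  rw [hupd1] at hU1
  have u20 : φ (Prof pBADC pADBC) 2 0 = 0 := by rw [hU1 0 (by decide)]; exact g20
  have u21 : φ (Prof pBADC pADBC) 2 1 = 7/12 := by rw [hU1 1 (by decide)]; exact g21
  -- agent 3 swaps b,d starting from (BADC, ABDC)
  have hupd2 : Function.update (Prof pBADC pABDC) 3 pADBC = Prof pBADC pADBC := by
    funext k; fin_cases k <;> simp [Prof, Function.update]
  have hsw2 : AdjSwap (Prof pBADC pABDC 3) pADBC 1 3 :=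
    ⟨by decide, by ext z; fin_cases z <;> rfl⟩
  have hU2 := hUI (Prof pBADC pABDC) 3 1 3 pADBC hsw2
  have hL2 := hLI (Prof pBADC pABDC) 3 1 3 pADBC hsw2
  rw [hupd2] at hU2 hL2
  have u30 : φ (Prof pBADC pADBC) 3 0 = 1/3 := by rw [hU2 0 (by decide)]; exact h30
  have l32 : φ (Prof pBADC pADBC) 3 2 = 0 := by rw [hL2 2 (by decide)]; exact h32
  obtain ⟨hnn, hrow, hcol⟩ := hV (Prof pBADC pADBC)
  have r0 := hrow 0
  have r2 := hrow 2
  have r3 := hrow 3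
  have c0 := hcol 0
  have c1 := hcol 1
  have c2 := hcol 2
  have c3 := hcol 3
  rw [Fin.sum_univ_four] at r0 r2 r3 c0 c1 c2 c3
  have e1 : ∀ j, φ (Prof pBADC pADBC) 0 j = φ (Prof pBADC pADBC) 1 j :=
    fun j => congrFun (hS (Prof pBADC pADBC) 0 1 rfl) j
  have T1 := notrade (Prof pBADC pADBC) _ (hV _) (hOE _) 3 0 1 3
    (by decide) (by decide) (by decide)
  have T2 := notrade (Prof pBADC pADBC) _ (hV _) (hOE _) 3 2 1 3
    (by decide) (by decide) (by decide)
  have T3 := notrade (Prof pBADC pADBC) _ (hV _) (hOE _) 2 0 2 3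
    (by decide) (by decide) (by decide)
  have x31 : φ (Prof pBADC pADBC) 3 1 = 0 := by
    rcases T1 with h | h
    · exact h
    · rcases T2 with h' | h'
      · exact h'
      · exfalso
        have := e1 3
        linarith [hnn 3 1]
  have x33 : φ (Prof pBADC pADBC) 3 3 = 2/3 := by linarith
  have x00 : φ (Prof pBADC pADBC) 0 0 = 1/3 := by linarith [e1 0]
  have x01 : φ (Prof pBADC pADBC) 0 1 = 5/24 := by linarith [e1 1]
  have x03 : φ (Prof pBADC pADBC) 0 3 = 0 := by
    rcases T3 with h | h
    · exfalso
      have := e1 3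
      linarith [hnn 0 3]
    · exact h
  have x02 : φ (Prof pBADC pADBC) 0 2 = 11/24 := by linarith
  have x22 : φ (Prof pBADC pADBC) 2 2 = 1/12 := by linarith [e1 2]
  have x23 : φ (Prof pBADC pADBC) 2 3 = 1/3 := by linarith
  have x10 : φ (Prof pBADC pADBC) 1 0 = 1/3 := by linarith [e1 0]
  have x11 : φ (Prof pBADC pADBC) 1 1 = 5/24 := by linarith [e1 1]
  have x12 : φ (Prof pBADC pADBC) 1 2 = 11/24 := by linarith [e1 2]
  have x13 : φ (Prof pBADC pADBC) 1 3 = 0 := by linarith [e1 3]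
  refine ⟨1/12, by norm_num, by norm_num, ?_, ?_⟩
  · intro i
    fin_cases i
    · show φ (Prof pBADC pADBC) 0 = ![1/3, 5/24, 11/24, 0]
      funext j; fin_cases j
      · exact x00
      · exact x01
      · exact x02
      · exact x03
    · show φ (Prof pBADC pADBC) 1 = ![1/3, 5/24, 11/24, 0]
      funext j; fin_cases j
      · exact x10
      · exact x11
      · exact x12
      · exact x13
    · show φ (Prof pBADC pADBC) 2 = ![0, 7/12, 1/12, 5/12 - 1/12]
      funext j; fin_cases j
      · exact u20
      · exact u21
      · exact x22
      · show φ (Prof pBADC pADBC) 2 3 = 5/12 - 1/12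
        rw [x23]; norm_num
    · show φ (Prof pBADC pADBC) 3 = ![1/3, 0, 1/12 - 1/12, 7/12 + 1/12]
      funext j; fin_cases j
      · exact u30
      · exact x31
      · show φ (Prof pBADC pADBC) 3 2 = 1/12 - 1/12
        rw [l32]; norm_num
      · show φ (Prof pBADC pADBC) 3 3 = 7/12 + 1/12
        rw [x33]; norm_num
  · show φ (Prof pBADC pADBC) 2 2 ≤ 1/12
    rw [x22]
end

section
/- Let φ be an ordinally efficient, anonymous, and neutral mechanism on 4 agents and objects {a,b,c,d}. At the profile where agents 1,2 report a ≻ b ≻ c ≻ d and agents 3,4 report b ≻ a ≻ d ≻ c, the assignment is: agents 1,2 each get (1/2, 0, 1/2, 0) for (a,b,c,d), and agents 3,4 each get (0, 1/2, 0, 1/2). -/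
open Finset

def pisw : Equiv.Perm (Fin 4) := (Equiv.swap 0 1).trans (Equiv.swap 2 3)
noncomputable def PI : Fin 4 → Pref 4 := ![pABCD, pABCD, pBADC, pBADC]
noncomputable def QI : Fin 4 → Pref 4 := ![pBADC, pBADC, pABCD, pABCD]
noncomputable def RI : Fin 4 → Pref 4 := ![pABCD, pBADC, pBADC, pABCD]
lemma tA : pisw.symm.trans pABCD = pBADC := by apply Equiv.ext; decide
lemma tB : pisw.symm.trans pBADC = pABCD := by apply Equiv.ext; decide
lemma hPeq : (fun k : Fin 4 => if k = 2 ∨ k = 3 then pBADC else pABCD) = PI := by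
  funext k; fin_cases k <;> simp [PI]
lemma e1 : (fun k => PI (Equiv.swap 0 1 k)) = PI := by
  funext k; fin_cases k <;> simp [PI, Equiv.swap_apply_def]
lemma e2 : (fun k => PI (Equiv.swap 2 3 k)) = PI := by
  funext k; fin_cases k <;> simp [PI, Equiv.swap_apply_def]
lemma e3 : (fun k => pisw.symm.trans (PI k)) = QI := by
  funext k; fin_cases k <;> simp [PI, QI, tA, tB]
lemma e4 : (fun k => QI (Equiv.swap 0 2 k)) = RI := by
  funext k; fin_cases k <;> simp [QI, RI, Equiv.swap_apply_def]
lemma e5 : (fun k => RI (Equiv.swap 2 1 k)) = RI := by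
  funext k; fin_cases k <;> simp [RI, Equiv.swap_apply_def]
lemma e6 : (fun k => RI (Equiv.swap 1 3 k)) = PI := by
  funext k; fin_cases k <;> simp [PI, RI, Equiv.swap_apply_def]
lemma e7 : (fun k => PI (Equiv.swap 3 2 k)) = PI := by
  funext k; fin_cases k <;> simp [PI, Equiv.swap_apply_def]

-- filter computations
lemma fA0 : univ.filter (fun k => pABCD k ≤ pABCD 0) = {0} := by decide
lemma fA1 : univ.filter (fun k => pABCD k ≤ pABCD 1) = {0,1} := by decide
lemma fA2 : univ.filter (fun k => pABCD k ≤ pABCD 2) = {0,1,2} := by decide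
lemma fA3 : univ.filter (fun k => pABCD k ≤ pABCD 3) = {0,1,2,3} := by decide
lemma fB0 : univ.filter (fun k => pBADC k ≤ pBADC 0) = {0,1} := by decide
lemma fB1 : univ.filter (fun k => pBADC k ≤ pBADC 1) = {1} := by decide

lemma fB2 : univ.filter (fun k => pBADC k ≤ pBADC 2) = {0,1,2,3} := by decide
lemma fB3 : univ.filter (fun k => pBADC k ≤ pBADC 3) = {0,1,3} := by decide

-- helper sum lemmas over explicit finsets
lemma s0 (f : Fin 4 → ℝ) : ∑ k ∈ ({0} : Finset (Fin 4)), f k = f 0 := Finset.sum_singleton f 0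
lemma s1 (f : Fin 4 → ℝ) : ∑ k ∈ ({1} : Finset (Fin 4)), f k = f 1 := Finset.sum_singleton f 1
lemma s01 (f : Fin 4 → ℝ) : ∑ k ∈ ({0,1} : Finset (Fin 4)), f k = f 0 + f 1 := by
  rw [Finset.sum_insert (by decide), Finset.sum_singleton]
lemma s012 (f : Fin 4 → ℝ) : ∑ k ∈ ({0,1,2} : Finset (Fin 4)), f k = f 0 + (f 1 + f 2) := by
  rw [Finset.sum_insert (by decide), Finset.sum_insert (by decide), Finset.sum_singleton]
lemma s0123 (f : Fin 4 → ℝ) : ∑ k ∈ ({0,1,2,3} : Finset (Fin 4)), f k = f 0 + (f 1 + (f 2 + f 3)) := by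
  rw [Finset.sum_insert (by decide), Finset.sum_insert (by decide),
    Finset.sum_insert (by decide), Finset.sum_singleton]
lemma s013 (f : Fin 4 → ℝ) : ∑ k ∈ ({0,1,3} : Finset (Fin 4)), f k = f 0 + (f 1 + f 3) := by
  rw [Finset.sum_insert (by decide), Finset.sum_insert (by decide), Finset.sum_singleton]

lemma fosdA {x y : Fin 4 → ℝ} (h0 : x 0 ≤ y 0) (h1 : x 0 + x 1 ≤ y 0 + y 1)
    (h2 : x 0 + x 1 + x 2 ≤ y 0 + y 1 + y 2) (h3 : x 0 + x 1 + x 2 + x 3 ≤ y 0 + y 1 + y 2 + y 3) :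
    FOSD pABCD y x := by
  intro j
  have hj : j = 0 ∨ j = 1 ∨ j = 2 ∨ j = 3 := by omega
  rcases hj with rfl | rfl | rfl | rfl <;>
    simp only [fA0, fA1, fA2, fA3, s0, s01, s012, s0123] <;> linarith

lemma fosdB {x y : Fin 4 → ℝ} (h0 : x 1 ≤ y 1) (h1 : x 0 + x 1 ≤ y 0 + y 1)
    (h2 : x 0 + x 1 + x 3 ≤ y 0 + y 1 + y 3) (h3 : x 0 + x 1 + x 2 + x 3 ≤ y 0 + y 1 + y 2 + y 3) :
    FOSD pBADC y x := by
  intro j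
  have hj : j = 0 ∨ j = 1 ∨ j = 2 ∨ j = 3 := by omega
  rcases hj with rfl | rfl | rfl | rfl <;>
    simp only [fB0, fB1, fB2, fB3, s0, s1, s01, s012, s0123, s013] <;> linarith

theorem profile_I_thm2 (φ : Mechanism 4)
    (hV : ValidMech φ) (hOE : OrdEff φ) (hA : Anonymous φ) (hN : Neutral φ) :
    ∀ i : Fin 4,
      φ (fun k => if k = 2 ∨ k = 3 then pBADC else pABCD) i =
        if i = 2 ∨ i = 3 then ![0, 1 / 2, 0, 1 / 2]
        else ![1 / 2, 0, 1 / 2, 0] := by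
  rw [hPeq]
  set x := φ PI with hx
  have hpos : ∀ i j, 0 ≤ x i j := (hV PI).1
  have hrow : ∀ i, ∑ j, x i j = 1 := (hV PI).2.1
  have hcol : ∀ j, ∑ i, x i j = 1 := (hV PI).2.2
  have h01 : x 0 = x 1 := by have := hA PI 0 1; rwa [e1] at this
  have h23 : x 2 = x 3 := by have := hA PI 2 3; rwa [e2] at this
  have key : ∀ j, x 0 j = x 2 (pisw j) := by
    intro j
    have n1 : φ QI 0 (pisw j) = x 0 j := by
      have := hN PI pisw 0 j; rwa [e3] at this
    have a1 : φ QI 0 = φ RI 2 := by have := hA QI 0 2; rwa [e4] at this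
    have a2 : φ RI 2 = φ RI 1 := by have := hA RI 2 1; rwa [e5] at this
    have a3 : φ RI 1 = x 3 := by have := hA RI 1 3; rwa [e6] at this
    rw [← n1, a1, a2, a3, ← h23]
  have k0 : x 0 0 = x 2 1 := by have := key 0; rwa [show pisw 0 = 1 from by decide] at this
  have k1 : x 0 1 = x 2 0 := by have := key 1; rwa [show pisw 1 = 0 from by decide] at this
  have k2 : x 0 2 = x 2 3 := by have := key 2; rwa [show pisw 2 = 3 from by decide] at this
  have k3 : x 0 3 = x 2 2 := by have := key 3; rwa [show pisw 3 = 2 from by decide] at this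
  have h10 : ∀ j, x 1 j = x 0 j := fun j => by rw [h01]
  have h32 : ∀ j, x 3 j = x 2 j := fun j => by rw [h23]
  have hr : ∀ i, x i 0 + x i 1 + x i 2 + x i 3 = 1 := by
    intro i; have := hrow i; rwa [Fin.sum_univ_four] at this
  have hc : ∀ j, x 0 j + x 1 j + x 2 j + x 3 j = 1 := by
    intro j; have := hcol j; rwa [Fin.sum_univ_four] at this
  -- ordinal efficiency: x 0 1 = 0
  have hb0 : x 0 1 = 0 := by
    by_contra h
    have hε : 0 < x 0 1 := lt_of_le_of_ne (hpos 0 1) (Ne.symm h)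
    set y : Assignment 4 := fun i j =>
      x i j + (if j = 0 then (if i = 0 ∨ i = 1 then x 0 1 else -(x 0 1))
        else if j = 1 then (if i = 0 ∨ i = 1 then -(x 0 1) else x 0 1) else 0) with hy
    refine hOE PI ⟨y, ⟨?_, ?_, ?_⟩, ?_, 0, 0, ?_⟩
    · intro i j; fin_cases i <;> fin_cases j <;> simp [hy] <;>
        linarith [hpos 0 0, hpos 0 1, hpos 0 2, hpos 0 3, hpos 1 0, hpos 1 1, hpos 1 2, hpos 1 3, hpos 2 0, hpos 2 1, hpos 2 2, hpos 2 3, hpos 3 0, hpos 3 1, hpos 3 2, hpos 3 3, h10 0, h10 1, h32 0, h32 1, k1, hε]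
    · intro i; rw [Fin.sum_univ_four]; fin_cases i <;> simp [hy] <;>
        linarith [hr 0, hr 1, hr 2, hr 3]
    · intro j; rw [Fin.sum_univ_four]; fin_cases j <;> simp [hy] <;>
        linarith [hc 0, hc 1, hc 2, hc 3, h10 0, h10 1, h32 0, h32 1, k1]
    · intro i
      have hi : i = 0 ∨ i = 1 ∨ i = 2 ∨ i = 3 := by omega
      rcases hi with rfl | rfl | rfl | rfl
      · exact fosdA (by simp [hy] <;> linarith [hpos 0 1]) (by simp [hy] <;> linarith)
          (by simp [hy] <;> linarith) (by simp [hy] <;> linarith)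
      · exact fosdA (by simp [hy] <;> linarith [hpos 0 1, h10 1]) (by simp [hy] <;> linarith)
          (by simp [hy] <;> linarith) (by simp [hy] <;> linarith)
      · exact fosdB (by simp [hy] <;> linarith [hpos 0 1, k1]) (by simp [hy] <;> linarith)
          (by simp [hy] <;> linarith) (by simp [hy] <;> linarith)
      · exact fosdB (by simp [hy] <;> linarith [hpos 0 1, k1, h32 0]) (by simp [hy] <;> linarith)
          (by simp [hy] <;> linarith) (by simp [hy] <;> linarith)
    · have e : univ.filter (fun k => PI 0 k ≤ PI 0 0) = {0} := fA0
      rw [e, s0, s0]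
      simp [hy] <;> linarith [hε]
  -- ordinal efficiency: x 0 3 = 0
  have hd0 : x 0 3 = 0 := by
    by_contra h
    have hε : 0 < x 0 3 := lt_of_le_of_ne (hpos 0 3) (Ne.symm h)
    set y : Assignment 4 := fun i j =>
      x i j + (if j = 2 then (if i = 0 ∨ i = 1 then x 0 3 else -(x 0 3))
        else if j = 3 then (if i = 0 ∨ i = 1 then -(x 0 3) else x 0 3) else 0) with hy
    refine hOE PI ⟨y, ⟨?_, ?_, ?_⟩, ?_, 0, 2, ?_⟩
    · intro i j; fin_cases i <;> fin_cases j <;> simp [hy] <;>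
        linarith [hpos 0 0, hpos 0 1, hpos 0 2, hpos 0 3, hpos 1 0, hpos 1 1, hpos 1 2,
          hpos 1 3, hpos 2 0, hpos 2 1, hpos 2 2, hpos 2 3, hpos 3 0, hpos 3 1, hpos 3 2,
          hpos 3 3, h10 2, h10 3, h32 2, h32 3, k3, hε]
    · intro i; rw [Fin.sum_univ_four]; fin_cases i <;> simp [hy] <;>
        linarith [hr 0, hr 1, hr 2, hr 3]
    · intro j; rw [Fin.sum_univ_four]; fin_cases j <;> simp [hy] <;>
        linarith [hc 0, hc 1, hc 2, hc 3, h10 2, h10 3, h32 2, h32 3, k3]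
    · intro i
      have hi : i = 0 ∨ i = 1 ∨ i = 2 ∨ i = 3 := by omega
      rcases hi with rfl | rfl | rfl | rfl
      · exact fosdA (by simp [hy] <;> linarith) (by simp [hy] <;> linarith)
          (by simp [hy] <;> linarith [hpos 0 3]) (by simp [hy] <;> linarith)
      · exact fosdA (by simp [hy] <;> linarith) (by simp [hy] <;> linarith)
          (by simp [hy] <;> linarith [hpos 0 3, h10 3]) (by simp [hy] <;> linarith)
      · exact fosdB (by simp [hy] <;> linarith) (by simp [hy] <;> linarith)
          (by simp [hy] <;> linarith [hpos 0 3, k3]) (by simp [hy] <;> linarith)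
      · exact fosdB (by simp [hy] <;> linarith) (by simp [hy] <;> linarith)
          (by simp [hy] <;> linarith [hpos 0 3, k3, h32 3]) (by simp [hy] <;> linarith)
    · have e : univ.filter (fun k => PI 0 k ≤ PI 0 2) = {0,1,2} := fA2
      rw [e, s012, s012]
      simp [hy] <;> linarith [hε]
  -- solve for the entries
  have e00 : x 0 0 = 1 / 2 := by
    have := hc 0
    linarith [h10 0, h32 0, k1, hb0, this]
  have e02 : x 0 2 = 1 / 2 := by
    have := hc 2
    linarith [h10 2, h32 2, k3, hd0, this]
  have row0 : x 0 = ![1 / 2, 0, 1 / 2, 0] := by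
    funext j
    have hj : j = 0 ∨ j = 1 ∨ j = 2 ∨ j = 3 := by omega
    rcases hj with rfl | rfl | rfl | rfl <;> simp <;> linarith [e00, hb0, e02, hd0]
  have row2 : x 2 = ![0, 1 / 2, 0, 1 / 2] := by
    funext j
    have hj : j = 0 ∨ j = 1 ∨ j = 2 ∨ j = 3 := by omega
    rcases hj with rfl | rfl | rfl | rfl <;> simp <;>
      linarith [e00, hb0, e02, hd0, k0, k1, k2, k3]
  intro i
  have hi : i = 0 ∨ i = 1 ∨ i = 2 ∨ i = 3 := by omega
  rcases hi with rfl | rfl | rfl | rfl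
  · rw [if_neg (by decide)]; exact row0
  · rw [if_neg (by decide), ← h01]; exact row0
  · rw [if_pos (by decide)]; exact row2
  · rw [if_pos (by decide), ← h23]; exact row2
end

section
/- Let φ be an ordinally efficient, anonymous, and neutral mechanism on 4 agents and objects {a,b,c,d}. At the profile where agents 1,2 report a ≻ b ≻ c ≻ d and agents 3,4 report d ≻ b ≻ c ≻ a, the assignment is: agents 1,2 each get (1/2, 1/4, 1/4, 0) for (a,b,c,d), and agents 3,4 each get (0, 1/4, 1/4, 1/2). -/
open Finset

noncomputable def PX : Fin 4 → Pref 4 := fun k => if k = 2 ∨ k = 3 then pDBCA else pABCD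

lemma fosd_refl {n : ℕ} (P : Pref n) (x y : Fin n → ℝ) (h : ∀ k, y k = x k) :
    FOSD P y x :=
  fun t => le_of_eq (Finset.sum_congr rfl fun k _ => (h k).symm)

lemma fosd_transfer {n : ℕ} (P : Pref n) (x y : Fin n → ℝ) (δ : ℝ) (hδ : 0 ≤ δ)
    (a j : Fin n) (hP : ∀ k, P a ≤ P k)
    (hy : ∀ k, y k = x k + (if k = a then δ else 0) - (if k = j then δ else 0)) :
    FOSD P y x := by
  intro t
  rw [Finset.sum_congr rfl fun k _ => hy k]
  rw [Finset.sum_sub_distrib, Finset.sum_add_distrib, Finset.sum_ite_eq' , Finset.sum_ite_eq']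
  have ha : a ∈ univ.filter (fun k => P k ≤ P t) := by
    simp [Finset.mem_filter, hP t]
  rw [if_pos ha]
  split_ifs <;> linarith

lemma fosd_transfer' {n : ℕ} (P : Pref n) (x y : Fin n → ℝ) (δ : ℝ) (hδ : 0 ≤ δ)
    (a j : Fin n) (hP : ∀ k, P k ≤ P a)
    (hy : ∀ k, y k = x k + (if k = j then δ else 0) - (if k = a then δ else 0)) :
    FOSD P y x := by
  intro t
  rw [Finset.sum_congr rfl fun k _ => hy k]
  rw [Finset.sum_sub_distrib, Finset.sum_add_distrib, Finset.sum_ite_eq' , Finset.sum_ite_eq']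
  by_cases ha : a ∈ univ.filter (fun k => P k ≤ P t)
  · have hj : j ∈ univ.filter (fun k => P k ≤ P t) := by
      simp only [Finset.mem_filter, Finset.mem_univ, true_and] at ha ⊢
      exact le_trans (hP j) ha
    rw [if_pos ha, if_pos hj]; linarith
  · rw [if_neg ha]
    split_ifs <;> linarith

lemma trade_s12 (x : Assignment 4) (hB : BiStochastic x) (j : Fin 4) (hj : j ≠ 0)
    (h0 : 0 < x 0 j) (h2 : 0 < x 2 0) :
    ∃ y, BiStochastic y ∧ StrictDom PX y x := by
  obtain ⟨hnn, hrow, hcol⟩ := hB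
  set δ := min (x 0 j) (x 2 0) with hδdef
  have hδ : 0 < δ := lt_min h0 h2
  have hδ1 : δ ≤ x 0 j := min_le_left _ _
  have hδ2 : δ ≤ x 2 0 := min_le_right _ _
  refine ⟨fun i k => x i k + (if (i = 0 ∧ k = 0) ∨ (i = 2 ∧ k = j) then δ else 0)
      - (if (i = 0 ∧ k = j) ∨ (i = 2 ∧ k = 0) then δ else 0), ⟨?_, ?_, ?_⟩, ?_, ?_⟩
  · -- nonneg
    intro i k
    fin_cases i <;> fin_cases k <;> simp <;> (try split_ifs) <;> (try subst_vars) <;>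
      linarith [hnn 0 0, hnn 0 1, hnn 0 2, hnn 0 3, hnn 1 0, hnn 1 1, hnn 1 2, hnn 1 3, hnn 2 0, hnn 2 1, hnn 2 2, hnn 2 3, hnn 3 0, hnn 3 1, hnn 3 2, hnn 3 3, hδ, hδ1, hδ2]
  · -- rows
    intro i
    fin_cases i <;>
      simp [Finset.sum_sub_distrib, Finset.sum_add_distrib, Finset.sum_ite_eq',
        Finset.sum_ite_eq] <;>
      linarith [hrow 0, hrow 1, hrow 2, hrow 3]
  · -- cols
    intro k
    have c := hcol k
    rw [Fin.sum_univ_four] at c ⊢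
    simp only []
    simp
    split_ifs <;> linarith [c]
  · -- FOSD
    intro i
    fin_cases i
    · exact fosd_transfer _ _ _ δ hδ.le 0 j (by decide) (fun k => by simp)
    · exact fosd_refl _ _ _ (fun k => by simp)
    · exact fosd_transfer' _ _ _ δ hδ.le 0 j (by decide) (fun k => by simp)
    · exact fosd_refl _ _ _ (fun k => by simp)
  · -- strict
    refine ⟨0, 0, ?_⟩
    rw [show univ.filter (fun k => PX 0 k ≤ PX 0 0) = {0} from by decide]
    rw [Finset.sum_singleton, Finset.sum_singleton]
    simp [Ne.symm hj]
    linarith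
noncomputable def PY : Fin 4 → Pref 4 := fun k => if k = 2 ∨ k = 3 then pABCD else pDBCA
noncomputable def QX : Fin 4 → Pref 4 := fun k => if k = 1 ∨ k = 2 then pDBCA else pABCD

lemma eA : (fun k => PX (Equiv.swap (0:Fin 4) 1 k)) = PX := by
  funext k; fin_cases k <;> simp [PX, Equiv.swap_apply_def]
lemma eE : (fun k => PX (Equiv.swap (2:Fin 4) 3 k)) = PX := by
  funext k; fin_cases k <;> simp [PX, Equiv.swap_apply_def]
lemma eN : (fun k => (Equiv.swap (0:Fin 4) 3).symm.trans (PX k)) = PY := by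
  funext k; fin_cases k <;> exact Equiv.ext (by decide)
lemma eB : (fun k => PY (Equiv.swap (0:Fin 4) 2 k)) = QX := by
  funext k; fin_cases k <;> simp [PY, QX, Equiv.swap_apply_def]
lemma eC : (fun k => QX (Equiv.swap (1:Fin 4) 2 k)) = QX := by
  funext k; fin_cases k <;> simp [QX, Equiv.swap_apply_def]
lemma eD : (fun k => QX (Equiv.swap (1:Fin 4) 3 k)) = PX := by
  funext k; fin_cases k <;> simp [PX, QX, Equiv.swap_apply_def]

theorem profile_III_thm2 (φ : Mechanism 4)
    (hV : ValidMech φ) (hOE : OrdEff φ) (hA : Anonymous φ) (hN : Neutral φ) :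
    ∀ i : Fin 4,
      φ (fun k => if k = 2 ∨ k = 3 then pDBCA else pABCD) i =
        if i = 2 ∨ i = 3 then ![0, 1 / 4, 1 / 4, 1 / 2]
        else ![1 / 2, 1 / 4, 1 / 4, 0] := by

  show ∀ i : Fin 4, φ PX i = _
  obtain ⟨hnn, hrow, hcol⟩ := hV PX
  have hx01 : φ PX 0 = φ PX 1 := by have := hA PX 0 1; rwa [eA] at this
  have hx23 : φ PX 2 = φ PX 3 := by have := hA PX 2 3; rwa [eE] at this
  have hNch : ∀ m, φ PX 0 m = φ PX 2 (Equiv.swap (0:Fin 4) 3 m) := by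
    intro m
    have h1 := hN PX (Equiv.swap (0:Fin 4) 3) 0 m
    rw [eN] at h1
    have h2 : φ PY 0 = φ QX 2 := by have := hA PY 0 2; rwa [eB] at this
    have h3 : φ QX 1 = φ QX 2 := by have := hA QX 1 2; rwa [eC] at this
    have h4 : φ QX 1 = φ PX 3 := by have := hA QX 1 3; rwa [eD] at this
    rw [← h1, h2, ← h3, h4, ← hx23]
  have s0 : φ PX 0 0 = φ PX 2 3 := by
    have := hNch 0; rwa [show Equiv.swap (0:Fin 4) 3 0 = 3 from by decide] at this
  have s1 : φ PX 0 1 = φ PX 2 1 := by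
    have := hNch 1; rwa [show Equiv.swap (0:Fin 4) 3 1 = 1 from by decide] at this
  have s2 : φ PX 0 2 = φ PX 2 2 := by
    have := hNch 2; rwa [show Equiv.swap (0:Fin 4) 3 2 = 2 from by decide] at this
  have s3 : φ PX 0 3 = φ PX 2 0 := by
    have := hNch 3; rwa [show Equiv.swap (0:Fin 4) 3 3 = 0 from by decide] at this
  have r0 := hrow 0; have r2 := hrow 2
  have c0 := hcol 0; have c1 := hcol 1; have c2 := hcol 2; have c3 := hcol 3
  rw [Fin.sum_univ_four] at r0 r2 c0 c1 c2 c3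
  have q0 := congrFun hx01 0; have q1 := congrFun hx01 1
  have q2 := congrFun hx01 2; have q3 := congrFun hx01 3
  have w0 := congrFun hx23 0; have w1 := congrFun hx23 1
  have w2 := congrFun hx23 2; have w3 := congrFun hx23 3
  have h20 : φ PX 2 0 = 0 := by
    by_contra hne
    have h2pos : 0 < φ PX 2 0 := lt_of_le_of_ne (hnn 2 0) (Ne.symm hne)
    have hex : 0 < φ PX 0 1 ∨ 0 < φ PX 0 2 ∨ 0 < φ PX 0 3 := by
      by_contra hc; push_neg at hc
      linarith [hc.1, hc.2.1, hc.2.2, hnn 0 1, hnn 0 2, hnn 0 3, hnn 1 0, hnn 3 0]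
    obtain h | h | h := hex
    · exact hOE PX (trade_s12 (φ PX) (hV PX) 1 (by decide) h h2pos)
    · exact hOE PX (trade_s12 (φ PX) (hV PX) 2 (by decide) h h2pos)
    · exact hOE PX (trade_s12 (φ PX) (hV PX) 3 (by decide) h h2pos)
  intro i
  fin_cases i <;> simp <;> funext m <;> fin_cases m <;> simp <;>
    linarith [s0, s1, s2, s3, r0, r2, c0, c1, c2, c3, q0, q1, q2, q3, w0, w1, w2, w3, h20]
end

section
/- Let φ be a swap monotonic, lower invariant, ordinally efficient, anonymous, neutral, and non-bossy mechanism on 4 agents and objects {a,b,c,d}. At the profile where agents 1,2 report a ≻ b ≻ c ≻ d, agent 3 reports b ≻ d ≻ c ≻ a, and agent 4 reports d ≻ b ≻ c ≻ a, the assignment is: agents 1,2 each get (1/2, 1/8, 3/8, 0) for (a,b,c,d), agent 3 gets (0, 3/4, 1/4, 0), and agent 4 gets (0, 0, 0, 1). -/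
open Finset

noncomputable def pBDAC : Pref 4 := Equiv.ofBijective ![2, 0, 3, 1] (by decide)

lemma sum_e {n : ℕ} (o o' : Fin n) (m : ℝ) (s : Finset (Fin n)) :
    ∑ j ∈ s, ((if j = o' then m else 0) - (if j = o then m else 0))
      = (if o' ∈ s then m else 0) - (if o ∈ s then m else 0) := by
  rw [Finset.sum_sub_distrib]
  simp [Finset.sum_ite_eq' s]

lemma trade_s14 {n : ℕ} {φ : Mechanism n} (hV : ValidMech φ) (hOE : OrdEff φ)
    (P : Fin n → Pref n) {i i' o o' : Fin n} (hii : i ≠ i') (hoo : o ≠ o')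
    (hi : P i o' < P i o) (hi' : P i' o < P i' o') :
    φ P i o = 0 ∨ φ P i' o' = 0 := by
  by_contra hcon
  push_neg at hcon
  obtain ⟨h1, h2⟩ := hcon
  have hbi := hV P
  have hpos : 0 < φ P i o := lt_of_le_of_ne (hbi.1 i o) (Ne.symm h1)
  have hpos' : 0 < φ P i' o' := lt_of_le_of_ne (hbi.1 i' o') (Ne.symm h2)
  obtain ⟨m, hm⟩ : ∃ m : ℝ, m = min (φ P i o) (φ P i' o') := ⟨_, rfl⟩
  have hmpos : 0 < m := hm ▸ lt_min hpos hpos'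
  have hmo : m ≤ φ P i o := hm ▸ min_le_left _ _
  have hmo' : m ≤ φ P i' o' := hm ▸ min_le_right _ _
  obtain ⟨e, he⟩ : ∃ e : Fin n → ℝ,
      e = fun j => (if j = o' then m else 0) - (if j = o then m else 0) := ⟨_, rfl⟩
  have hse : ∀ s : Finset (Fin n),
      ∑ j ∈ s, e j = (if o' ∈ s then m else 0) - (if o ∈ s then m else 0) := by
    intro s; simp only [he]; exact sum_e o o' m s
  have heo : e o = -m := by simp [he, hoo]
  have heo' : e o' = m := by simp [he, Ne.symm hoo]
  have hez : ∀ j, j ≠ o → j ≠ o' → e j = 0 := by intro j hj hj'; simp [he, hj, hj']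
  obtain ⟨y, hy⟩ : ∃ y : Assignment n,
      y = fun k j => φ P k j + (if k = i then e j else if k = i' then - e j else 0) := ⟨_, rfl⟩
  have hyi : ∀ j, y i j = φ P i j + e j := by
    intro j; simp [hy]
  have hyi' : ∀ j, y i' j = φ P i' j - e j := by
    intro j; simp [hy, Ne.symm hii]; ring
  have hyk : ∀ k, k ≠ i → k ≠ i' → ∀ j, y k j = φ P k j := by
    intro k hk hk' j; simp [hy, hk, hk']
  have hrowi : ∀ (a : Fin n) (s : Finset (Fin n)),
      ∑ j ∈ s, y a j = (∑ j ∈ s, φ P a j) + (if a = i then 1 else if a = i' then -1 else 0) *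
        ((if o' ∈ s then m else 0) - (if o ∈ s then m else 0)) := by
    intro a s
    rcases eq_or_ne a i with hk | hk
    · rw [hk]
      have h1' : ∑ j ∈ s, y i j = ∑ j ∈ s, (φ P i j + e j) :=
        Finset.sum_congr rfl fun j _ => hyi j
      rw [h1', Finset.sum_add_distrib, hse s, if_pos rfl]; ring
    · rcases eq_or_ne a i' with hk' | hk'
      · rw [hk']
        have h1' : ∑ j ∈ s, y i' j = ∑ j ∈ s, (φ P i' j - e j) :=
          Finset.sum_congr rfl fun j _ => hyi' j
        rw [h1', Finset.sum_sub_distrib, hse s, if_neg (Ne.symm hii), if_pos rfl]; ring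
      · have h1' : ∑ j ∈ s, y a j = ∑ j ∈ s, φ P a j :=
          Finset.sum_congr rfl fun j _ => hyk a hk hk' j
        rw [h1', if_neg hk, if_neg hk']; ring
  have hBi : BiStochastic y := by
    refine ⟨?_, ?_, ?_⟩
    · intro k j
      rcases eq_or_ne k i with hk | hk
      · rw [hk]
        rcases eq_or_ne j o with hj | hj
        · rw [hj, hyi, heo]; linarith
        · rcases eq_or_ne j o' with hj' | hj'
          · rw [hj', hyi, heo']; linarith [hbi.1 i o']
          · rw [hyi, hez j hj hj', add_zero]; exact hbi.1 i j
      · rcases eq_or_ne k i' with hk' | hk'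
        · rw [hk']
          rcases eq_or_ne j o with hj | hj
          · rw [hj, hyi', heo]; linarith [hbi.1 i' o]
          · rcases eq_or_ne j o' with hj' | hj'
            · rw [hj', hyi', heo']; linarith
            · rw [hyi', hez j hj hj', sub_zero]; exact hbi.1 i' j
        · rw [hyk k hk hk']; exact hbi.1 k j
    · intro k
      rw [hrowi k Finset.univ]
      simp [hbi.2.1 k]
    · intro j
      have : ∀ k, y k j = φ P k j + ((if k = i then e j else 0) + (if k = i' then - e j else 0)) := by
        intro k
        rcases eq_or_ne k i with hk | hk
        · rw [hk, hyi, if_pos rfl, if_neg hii]; ring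
        · rcases eq_or_ne k i' with hk' | hk'
          · rw [hk', hyi', if_neg (Ne.symm hii), if_pos rfl]; ring
          · rw [hyk k hk hk', if_neg hk, if_neg hk']; ring
      simp only [this, Finset.sum_add_distrib, Finset.sum_ite_eq' Finset.univ i (fun _ => e j),
        Finset.sum_ite_eq' Finset.univ i' (fun _ => - e j)]
      simp [hbi.2.2 j]
  have hFOSD : ∀ a, FOSD (P a) (y a) (φ P a) := by
    intro a j
    rw [hrowi a _]
    rcases eq_or_ne a i with hk | hk
    · have hia : P a o' < P a o := by rw [hk]; exact hi
      rw [if_pos hk, one_mul]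
      by_cases hoin : o ∈ Finset.univ.filter (fun k => P a k ≤ P a j)
      · have ho'in : o' ∈ Finset.univ.filter (fun k => P a k ≤ P a j) := by
          simp only [Finset.mem_filter, Finset.mem_univ, true_and] at hoin ⊢
          exact le_of_lt (lt_of_lt_of_le hia hoin)
        simp [hoin, ho'in]
      · simp only [if_neg hoin, sub_zero]
        split <;> linarith
    · rcases eq_or_ne a i' with hk' | hk'
      · have hia : P a o < P a o' := by rw [hk']; exact hi'
        rw [if_neg hk, if_pos hk', neg_one_mul]
        by_cases hoin : o' ∈ Finset.univ.filter (fun k => P a k ≤ P a j)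
        · have ho'in : o ∈ Finset.univ.filter (fun k => P a k ≤ P a j) := by
            simp only [Finset.mem_filter, Finset.mem_univ, true_and] at hoin ⊢
            exact le_of_lt (lt_of_lt_of_le hia hoin)
          simp [hoin, ho'in]
        · rw [if_neg hoin]
          split <;> linarith
      · rw [if_neg hk, if_neg hk']
        simp
  have hstrict : ∑ k ∈ Finset.univ.filter (fun k => P i k ≤ P i o'), φ P i k <
      ∑ k ∈ Finset.univ.filter (fun k => P i k ≤ P i o'), y i k := by
    rw [hrowi i _, if_pos rfl, one_mul]
    have ho'in : o' ∈ Finset.univ.filter (fun k => P i k ≤ P i o') := by simp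
    have hoin : o ∉ Finset.univ.filter (fun k => P i k ≤ P i o') := by
      simp only [Finset.mem_filter, Finset.mem_univ, true_and]
      exact not_le.mpr hi
    rw [if_pos ho'in, if_neg hoin, sub_zero]
    linarith
  exact hOE P ⟨y, hBi, ⟨hFOSD, ⟨i, o', hstrict⟩⟩⟩

lemma ete {n : ℕ} {φ : Mechanism n} (hA : Anonymous φ) (P : Fin n → Pref n)
    (i i' : Fin n) (h : P i = P i') : φ P i = φ P i' := by
  have h1 := hA P i i'
  have h2 : (fun k => P (Equiv.swap i i' k)) = P := by
    funext k
    rcases eq_or_ne k i with hk | hk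
    · rw [hk, Equiv.swap_apply_left, ← h]
    · rcases eq_or_ne k i' with hk' | hk'
      · rw [hk', Equiv.swap_apply_right, h]
      · rw [Equiv.swap_apply_of_ne_of_ne hk hk']
  rwa [h2] at h1

lemma freeswap {n : ℕ} {φ : Mechanism n} (hV : ValidMech φ) (hSM : SwapMonotonic φ)
    (hNB : NonBossy φ) (P : Fin n → Pref n) (i j j' : Fin n) (P' : Pref n)
    (hsw : AdjSwap (P i) P' j j') (h0 : φ P i j = 0) :
    φ (Function.update P i P') = φ P := by
  rcases hSM P i j j' P' hsw with h | ⟨h1, _⟩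
  · exact hNB P i P' h
  · exact absurd h1 (not_lt.2 (h0 ▸ (hV _).1 i j))

def pf4 (p0 p1 p2 p3 : Pref 4) : Fin 4 → Pref 4 :=
  fun k => if k = 0 then p0 else if k = 1 then p1 else if k = 2 then p2 else p3

lemma sym_trick {φ : Mechanism 4} (hA : Anonymous φ) (hN : Neutral φ)
    (p q : Pref 4) (π : Equiv.Perm (Fin 4))
    (hq : (fun k => π.symm.trans ((pf4 p p q q) k)) = pf4 q q p p) :
    ∀ j, φ (pf4 p p q q) 2 j = φ (pf4 p p q q) 0 (π j) := by
  intro j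
  have hN' := hN (pf4 p p q q) π 2 j
  rw [hq] at hN'
  have h1 : φ (pf4 q q p p) 2 = φ (fun k => (pf4 q q p p) (Equiv.swap 2 0 k)) 0 :=
    hA (pf4 q q p p) 2 0
  have h2 : (fun k => (pf4 q q p p) (Equiv.swap 2 0 k)) = pf4 p q q p := by
    funext k; fin_cases k <;> rfl
  have h3 : φ (pf4 p q q p) 0 = φ (pf4 p q q p) 3 := ete hA _ 0 3 rfl
  have h4 : φ (pf4 p q q p) 3 = φ (fun k => (pf4 p q q p) (Equiv.swap 3 1 k)) 1 :=
    hA (pf4 p q q p) 3 1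
  have h5 : (fun k => (pf4 p q q p) (Equiv.swap 3 1 k)) = pf4 p p q q := by
    funext k; fin_cases k <;> rfl
  have h6 : φ (pf4 p p q q) 1 = φ (pf4 p p q q) 0 := ete hA _ 1 0 rfl
  rw [← hN', h1, h2, h3, h4, h5, h6]

noncomputable def PB := pf4 pABCD pABCD pBADC pBADC
noncomputable def PC := pf4 pABCD pABCD pBDAC pBADC
noncomputable def PD := pf4 pABCD pABCD pBDCA pBADC
noncomputable def PE := pf4 pABCD pABCD pBDCA pBDAC
noncomputable def PQ := pf4 pABCD pABCD pBDCA pBDCA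
noncomputable def PS := pf4 pABCD pABCD pDBCA pDBCA
noncomputable def PT := pf4 pABCD pABCD pBDCA pDBCA

noncomputable def piB : Equiv.Perm (Fin 4) := (Equiv.swap 0 1).trans (Equiv.swap 2 3)
noncomputable def piS : Equiv.Perm (Fin 4) := Equiv.swap 0 3

section Bvals
variable {φ : Mechanism 4} (hV : ValidMech φ) (hSM : SwapMonotonic φ)
  (hOE : OrdEff φ) (hA : Anonymous φ) (hN : Neutral φ) (hNB : NonBossy φ)

include hV hOE hA hN in
lemma rowsB :
    φ PB 0 0 = 1/2 ∧ φ PB 0 1 = 0 ∧ φ PB 0 2 = 1/2 ∧ φ PB 0 3 = 0 ∧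
    φ PB 2 0 = 0 ∧ φ PB 2 1 = 1/2 ∧ φ PB 2 2 = 0 ∧ φ PB 2 3 = 1/2 ∧
    φ PB 1 = φ PB 0 ∧ φ PB 3 = φ PB 2 := by
  have e01 : φ PB 1 = φ PB 0 := ete hA PB 1 0 rfl
  have e23 : φ PB 3 = φ PB 2 := ete hA PB 3 2 rfl
  have hqB : (fun k => piB.symm.trans ((pf4 pABCD pABCD pBADC pBADC) k))
      = pf4 pBADC pBADC pABCD pABCD := by
    funext k; fin_cases k <;> (ext x; fin_cases x <;> decide)
  have sym := sym_trick hA hN pABCD pBADC piB hqB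
  have s20 : φ PB 2 0 = φ PB 0 1 := by
    have := sym 0; rwa [show piB 0 = 1 by decide] at this
  have s21 : φ PB 2 1 = φ PB 0 0 := by
    have := sym 1; rwa [show piB 1 = 0 by decide] at this
  have s22 : φ PB 2 2 = φ PB 0 3 := by
    have := sym 2; rwa [show piB 2 = 3 by decide] at this
  have s23 : φ PB 2 3 = φ PB 0 2 := by
    have := sym 3; rwa [show piB 3 = 2 by decide] at this
  have tr1 := trade_s14 hV hOE PB (i := 0) (i' := 2) (o := 1) (o' := 0)
    (by decide) (by decide) (by decide) (by decide)
  have hb0 : φ PB 0 1 = 0 := by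
    rcases tr1 with h | h
    · exact h
    · rwa [s20] at h
  have tr2 := trade_s14 hV hOE PB (i := 0) (i' := 2) (o := 3) (o' := 2)
    (by decide) (by decide) (by decide) (by decide)
  have hd0 : φ PB 0 3 = 0 := by
    rcases tr2 with h | h
    · exact h
    · rwa [s22] at h
  have cola := (hV PB).2.2 0
  rw [Fin.sum_univ_four, e01, e23, s20, hb0] at cola
  have row0 := (hV PB).2.1 0
  rw [Fin.sum_univ_four, hb0, hd0] at row0
  have ha0 : φ PB 0 0 = 1/2 := by linarith
  have hc0 : φ PB 0 2 = 1/2 := by linarith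
  refine ⟨ha0, hb0, hc0, hd0, by rw [s20, hb0], by rw [s21, ha0],
    by rw [s22, hd0], by rw [s23, hc0], e01, e23⟩

include hV hSM hOE hA hN hNB in
lemma rowsQ :
    φ PQ 0 0 = 1/2 ∧ φ PQ 0 1 = 0 ∧ φ PQ 0 2 = 1/2 ∧ φ PQ 0 3 = 0 ∧
    φ PQ 2 0 = 0 ∧ φ PQ 2 1 = 1/2 ∧ φ PQ 2 2 = 0 ∧ φ PQ 2 3 = 1/2 ∧
    φ PQ 1 = φ PQ 0 ∧ φ PQ 3 = φ PQ 2 := by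
  obtain ⟨ha0, hb0, hc0, hd0, h20, h21, h22, h23, e01, e23⟩ := rowsB hV hOE hA hN
  have hBC : φ PC = φ PB := by
    have := freeswap hV hSM hNB PB 2 0 3 pBDAC
      ⟨by decide, by ext x; fin_cases x <;> decide⟩ h20
    rwa [show Function.update PB 2 pBDAC = PC by funext k; fin_cases k <;> rfl] at this
  have hCD : φ PD = φ PC := by
    have := freeswap hV hSM hNB PC 2 0 2 pBDCA
      ⟨by decide, by ext x; fin_cases x <;> decide⟩ (by rw [hBC]; exact h20)
    rwa [show Function.update PC 2 pBDCA = PD by funext k; fin_cases k <;> rfl] at this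
  have hDE : φ PE = φ PD := by
    have := freeswap hV hSM hNB PD 3 0 3 pBDAC
      ⟨by decide, by ext x; fin_cases x <;> decide⟩
      (by rw [hCD, hBC, e23]; exact h20)
    rwa [show Function.update PD 3 pBDAC = PE by funext k; fin_cases k <;> rfl] at this
  have hEQ : φ PQ = φ PE := by
    have := freeswap hV hSM hNB PE 3 0 2 pBDCA
      ⟨by decide, by ext x; fin_cases x <;> decide⟩
      (by rw [hDE, hCD, hBC, e23]; exact h20)
    rwa [show Function.update PE 3 pBDCA = PQ by funext k; fin_cases k <;> rfl] at this
  have hQB : φ PQ = φ PB := by rw [hEQ, hDE, hCD, hBC]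
  rw [hQB]
  exact ⟨ha0, hb0, hc0, hd0, h20, h21, h22, h23, e01, e23⟩

include hV hOE hA hN in
lemma rowsS : φ PS 2 2 = 1/4 := by
  have e01 : φ PS 1 = φ PS 0 := ete hA PS 1 0 rfl
  have e23 : φ PS 3 = φ PS 2 := ete hA PS 3 2 rfl
  have hqS : (fun k => piS.symm.trans ((pf4 pABCD pABCD pDBCA pDBCA) k))
      = pf4 pDBCA pDBCA pABCD pABCD := by
    funext k; fin_cases k <;> (ext x; fin_cases x <;> decide)
  have sym := sym_trick hA hN pABCD pDBCA piS hqS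
  have s20 : φ PS 2 0 = φ PS 0 3 := by
    have := sym 0; rwa [show piS 0 = 3 by decide] at this
  have s21 : φ PS 2 1 = φ PS 0 1 := by
    have := sym 1; rwa [show piS 1 = 1 by decide] at this
  have s22 : φ PS 2 2 = φ PS 0 2 := by
    have := sym 2; rwa [show piS 2 = 2 by decide] at this
  have tr1 := trade_s14 hV hOE PS (i := 0) (i' := 2) (o := 3) (o' := 0)
    (by decide) (by decide) (by decide) (by decide)
  have hd0 : φ PS 0 3 = 0 := by
    rcases tr1 with h | h
    · exact h
    · rwa [s20] at h
  have h20 : φ PS 2 0 = 0 := by rw [s20, hd0]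
  have cola := (hV PS).2.2 0
  rw [Fin.sum_univ_four, e01, e23, h20] at cola
  have colc := (hV PS).2.2 2
  rw [Fin.sum_univ_four, e01, e23, s22] at colc
  have colb := (hV PS).2.2 1
  rw [Fin.sum_univ_four, e01, e23, s21] at colb
  have row0 := (hV PS).2.1 0
  rw [Fin.sum_univ_four, hd0] at row0
  have ha0 : φ PS 0 0 = 1/2 := by linarith
  rw [s22]; linarith

end Bvals

theorem profile_IV_thm2 (φ : Mechanism 4)
    (hV : ValidMech φ) (hSM : SwapMonotonic φ) (hLI : LowerInvariant φ)
    (hOE : OrdEff φ) (hA : Anonymous φ) (hN : Neutral φ) (hNB : NonBossy φ) :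
    ∀ i : Fin 4,
      φ (fun k => if k = 2 then pBDCA else if k = 3 then pDBCA else pABCD) i =
        if i = 2 then ![0, 3 / 4, 1 / 4, 0]
        else if i = 3 then ![0, 0, 0, 1]
        else ![1 / 2, 1 / 8, 3 / 8, 0] := by
  have hPT : (fun k => if k = 2 then pBDCA else if k = 3 then pDBCA else pABCD) = PT := by
    funext k; fin_cases k <;> rfl
  rw [hPT]
  obtain ⟨qa0, qb0, qc0, qd0, q20, q21, q22, q23, qe01, qe23⟩ := rowsQ hV hSM hOE hA hN hNB
  have aswapQ : AdjSwap (PQ 3) pDBCA 1 3 := ⟨by decide, by ext x; fin_cases x <;> decide⟩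
  have huQT : Function.update PQ 3 pDBCA = PT := by funext k; fin_cases k <;> rfl
  have hLIQ := hLI PQ 3 1 3 pDBCA aswapQ
  rw [huQT] at hLIQ
  have h3c : φ PT 3 2 = 0 := by
    have := hLIQ 2 (by decide); rw [this, qe23]; exact q22
  have h3a : φ PT 3 0 = 0 := by
    have := hLIQ 0 (by decide); rw [this, qe23]; exact q20
  have e01 : φ PT 1 = φ PT 0 := ete hA PT 1 0 rfl
  -- agent 3's probability of b is 0
  have h3b : φ PT 3 1 = 0 := by
    by_contra hb
    have t0 := trade_s14 hV hOE PT (i := 0) (i' := 3) (o := 3) (o' := 1)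
      (by decide) (by decide) (by decide) (by decide)
    have t1 := trade_s14 hV hOE PT (i := 1) (i' := 3) (o := 3) (o' := 1)
      (by decide) (by decide) (by decide) (by decide)
    have t2 := trade_s14 hV hOE PT (i := 2) (i' := 3) (o := 3) (o' := 1)
      (by decide) (by decide) (by decide) (by decide)
    have z0 : φ PT 0 3 = 0 := t0.resolve_right hb
    have z1 : φ PT 1 3 = 0 := t1.resolve_right hb
    have z2 : φ PT 2 3 = 0 := t2.resolve_right hb
    have cold := (hV PT).2.2 3
    rw [Fin.sum_univ_four, z0, z1, z2] at cold
    have row3 := (hV PT).2.1 3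
    rw [Fin.sum_univ_four, h3a, h3c] at row3
    exact hb (by linarith)
  have row3 := (hV PT).2.1 3
  rw [Fin.sum_univ_four, h3a, h3b, h3c] at row3
  have h3d : φ PT 3 3 = 1 := by linarith
  have cold := (hV PT).2.2 3
  rw [Fin.sum_univ_four, h3d, e01] at cold
  have z03 : φ PT 0 3 = 0 := by
    have := (hV PT).1 0 3; have := (hV PT).1 2 3; linarith
  have z23 : φ PT 2 3 = 0 := by
    have := (hV PT).1 0 3; have := (hV PT).1 2 3; linarith
  -- agent 2's probability of a is 0
  have h2a : φ PT 2 0 = 0 := by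
    by_contra ha
    have t0 := trade_s14 hV hOE PT (i := 0) (i' := 2) (o := 1) (o' := 0)
      (by decide) (by decide) (by decide) (by decide)
    have t1 := trade_s14 hV hOE PT (i := 0) (i' := 2) (o := 2) (o' := 0)
      (by decide) (by decide) (by decide) (by decide)
    have z1 : φ PT 0 1 = 0 := t0.resolve_right ha
    have z2 : φ PT 0 2 = 0 := t1.resolve_right ha
    have row0 := (hV PT).2.1 0
    rw [Fin.sum_univ_four, z1, z2, z03] at row0
    have cola := (hV PT).2.2 0
    rw [Fin.sum_univ_four, e01, h3a] at cola
    have := (hV PT).1 2 0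
    linarith
  have cola := (hV PT).2.2 0
  rw [Fin.sum_univ_four, e01, h2a, h3a] at cola
  have h0a : φ PT 0 0 = 1/2 := by linarith
  -- lower invariance from PT to PS pins agent 2's share of c
  have hS22 := rowsS hV hOE hA hN
  have aswapT : AdjSwap (PT 2) pDBCA 1 3 := ⟨by decide, by ext x; fin_cases x <;> decide⟩
  have huTS : Function.update PT 2 pDBCA = PS := by funext k; fin_cases k <;> rfl
  have hLIT := hLI PT 2 1 3 pDBCA aswapT
  rw [huTS] at hLIT
  have h2c : φ PT 2 2 = 1/4 := by
    have := hLIT 2 (by decide); rw [← this]; exact hS22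
  have row2 := (hV PT).2.1 2
  rw [Fin.sum_univ_four, h2a, h2c, z23] at row2
  have h2b : φ PT 2 1 = 3/4 := by linarith
  have colb := (hV PT).2.2 1
  rw [Fin.sum_univ_four, e01, h2b, h3b] at colb
  have h0b : φ PT 0 1 = 1/8 := by linarith
  have colc := (hV PT).2.2 2
  rw [Fin.sum_univ_four, e01, h2c, h3c] at colc
  have h0c : φ PT 0 2 = 3/8 := by linarith
  intro i
  fin_cases i
  · funext j
    fin_cases j
    · exact h0a
    · exact h0b
    · exact h0c
    · exact z03
  · funext j
    fin_cases j
    · exact (congrFun e01 _).trans h0a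
    · exact (congrFun e01 _).trans h0b
    · exact (congrFun e01 _).trans h0c
    · exact (congrFun e01 _).trans z03
  · funext j
    fin_cases j
    · exact h2a
    · exact h2b
    · exact h2c
    · exact z23
  · funext j
    fin_cases j
    · exact h3a
    · exact h3b
    · exact h3c
    · exact h3d
end

section
/- For n agents and n objects, if a random assignment at some profile gives agent i positive probability for object j' while agent i prefers j to j', and gives another agent i' positive probability for j while i' prefers j' to j, then this assignment is strictly ordinally dominated; hence no ordinally efficient assignment can contain such a 2-cycle of positive probabilities. -/
open Finset

lemma sum_two_ite {n : ℕ} (a b : ℝ) (j j' : Fin n) (h : j ≠ j') (S : Finset (Fin n)) :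
    ∑ l ∈ S, (if l = j then a else if l = j' then b else 0)
      = (if j ∈ S then a else 0) + (if j' ∈ S then b else 0) := by
  have he : ∀ l, (if l = j then a else if l = j' then b else 0)
      = (if l = j then a else 0) + (if l = j' then b else 0) := by
    intro l
    rcases eq_or_ne l j with rfl | h1
    · simp [h]
    · simp [h1]
  simp_rw [he, Finset.sum_add_distrib]
  rw [Finset.sum_ite_eq' S j, Finset.sum_ite_eq' S j']

theorem two_cycle_not_ordinally_efficient (n : ℕ)
    (P : Fin n → Pref n) (x : Assignment n) (hx : BiStochastic x)
    (i i' j j' : Fin n)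
    (hij' : 0 < x i j') (hi'j : 0 < x i' j)
    (hiPref : P i j < P i j') (hi'Pref : P i' j' < P i' j) :
    ¬ OrdEffAt P x := by
  intro hOE
  obtain ⟨hpos, hrow, hcol⟩ := hx
  have hii' : i ≠ i' := by
    rintro rfl; exact absurd (hiPref.trans hi'Pref) (lt_irrefl _)
  have hjj' : j ≠ j' := by
    rintro rfl; exact lt_irrefl _ hiPref
  set ε : ℝ := min (x i j') (x i' j) with hε
  have hεpos : 0 < ε := lt_min hij' hi'j
  have h2 : ε ≤ x i j' := min_le_left _ _
  have h3 : ε ≤ x i' j := min_le_right _ _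
  set d : Assignment n := fun k l =>
    if k = i then (if l = j then ε else if l = j' then -ε else 0)
    else if k = i' then (if l = j then -ε else if l = j' then ε else 0)
    else 0 with hd
  -- sum of d over any subset, per agent
  have hdS : ∀ (k : Fin n) (S : Finset (Fin n)),
      ∑ l ∈ S, d k l =
        if k = i then (if j ∈ S then ε else 0) + (if j' ∈ S then -ε else 0)
        else if k = i' then (if j ∈ S then -ε else 0) + (if j' ∈ S then ε else 0)
        else 0 := by
    intro k S
    rcases eq_or_ne k i with rfl | hk
    · simp only [hd, if_pos rfl]
      exact sum_two_ite ε (-ε) j j' hjj' S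
    · rcases eq_or_ne k i' with rfl | hk'
      · simp only [hd, if_neg hk, if_pos rfl]
        exact sum_two_ite (-ε) ε j j' hjj' S
      · simp [hd, hk, hk']
  apply hOE
  refine ⟨fun k l => x k l + d k l, ⟨?_, ?_, ?_⟩, ?_, ?_⟩
  · -- nonnegativity
    intro k l
    have h1 := hpos k l
    simp only [hd]
    split_ifs <;> subst_vars <;> linarith
  · -- row sums
    intro k
    rw [Finset.sum_add_distrib, hrow k, hdS k univ]
    simp only [Finset.mem_univ, if_true]
    split_ifs <;> ring
  · -- column sums
    intro l
    rw [Finset.sum_add_distrib, hcol l]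
    have : ∑ k : Fin n, d k l =
        (if l = j then ε else if l = j' then -ε else 0) +
        (if l = j then -ε else if l = j' then ε else 0) := by
      have := sum_two_ite (if l = j then ε else if l = j' then -ε else 0)
        (if l = j then -ε else if l = j' then ε else 0) i i' hii' Finset.univ
      simpa [hd] using this
    rw [this]
    split_ifs <;> ring
  · -- FOSD for every agent
    intro k m
    set S := univ.filter (fun l => P k l ≤ P k m) with hS
    rw [Finset.sum_add_distrib, hdS k S]
    have hnn : (0:ℝ) ≤ if k = i then (if j ∈ S then ε else 0) + (if j' ∈ S then -ε else 0)
        else if k = i' then (if j ∈ S then -ε else 0) + (if j' ∈ S then ε else 0)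
        else 0 := by
      have hjmem : ∀ l, l ∈ S ↔ P k l ≤ P k m := by
        intro l; simp [hS]
      rcases eq_or_ne k i with rfl | hk
      · rw [if_pos rfl]
        by_cases hj' : j' ∈ S
        · have hj : j ∈ S := by
            rw [hjmem] at hj' ⊢
            exact le_of_lt (lt_of_lt_of_le hiPref hj')
          simp [hj, hj']
        · by_cases hj : j ∈ S <;> simp [hj, hj'] <;> linarith
      · rcases eq_or_ne k i' with rfl | hk'
        · rw [if_neg hk, if_pos rfl]
          by_cases hj : j ∈ S
          · have hj' : j' ∈ S := by
              rw [hjmem] at hj ⊢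
              exact le_of_lt (lt_of_lt_of_le hi'Pref hj)
            simp [hj, hj']
          · by_cases hj' : j' ∈ S <;> simp [hj, hj'] <;> linarith
        · simp [hk, hk']
    linarith
  · -- strictness at agent i, object j
    refine ⟨i, j, ?_⟩
    set S := univ.filter (fun l => P i l ≤ P i j) with hS
    rw [Finset.sum_add_distrib, hdS i S, if_pos rfl]
    have hj : j ∈ S := by simp [hS]
    have hj' : j' ∉ S := by simp [hS, not_le, hiPref]
    simp only [hj, hj', if_true, if_false, if_pos, if_neg]
    linarith
end
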